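/- arXiv:2303.04629 — 4 statements merged into one kernel-verified Lean document; each statement's English description precedes it below -/
import Mathlib

section
/- Strong maximum principle on a network: assume (H1) and let Γ be connected. Let g : Γ → ℝ be piecewise continuous (g_α ∈ C([0,ℓ_α]) for every α). If v ∈ C²(Γ) satisfies −μ_α ∂²v + g ∂v = 0 on Γ_α∖𝒱 for every α ∈ 𝒜 and the Kirchhoff condition Σ_{α∈𝒜_i} γ_{iα} μ_α ∂_α v(ν_i) = 0 at every vertex ν_i, then v is constant on Γ; conversely every constant function satisfies this problem. -/
/-!
On each edge the derivative `w = ∂v_α` solves the linear equation `μ_α w' = g_α w`, so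
`w = w(0) exp (∫ g_α / μ_α)` never changes sign: `v_α` is constant or strictly monotone.
Let `M` be the largest value of `v` at an endpoint of an edge. At a vertex where `M` is attained
every outward derivative is then `≥ 0`, and the Kirchhoff condition, a combination with positive
weights, forces all of them to vanish, so `v ≡ M` on every edge at that vertex. Connectedness
carries this from vertex to vertex over the whole network.
-/

open scoped Classical
open Set MeasureTheory

noncomputable section

/-- A finite network `Γ`: finitely many edges indexed by `ι` and vertices indexed by `I`.
Edge `α` has length `ℓ α > 0`; it is parametrized (isometrically) by `[0, ℓ α]`, joining the
vertex `e0 α` (at parameter `0`) to the vertex `e1 α` (at parameter `ℓ α`).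
A function on the network is represented edgewise as `v : ι → ℝ → ℝ`,
`v α` being `v_α = v|_{Γ_α} ∘ π_α`, read through the parametrization. -/
structure Network where
  (ι : Type)
  (I : Type)
  [fintE : Fintype ι]
  [fintV : Fintype I]
  (ℓ : ι → ℝ)
  (ℓ_pos : ∀ α, 0 < ℓ α)
  (e0 : ι → I)
  (e1 : ι → I)
  (no_loop : ∀ α, e0 α ≠ e1 α)

attribute [instance] Network.fintE Network.fintV

namespace Network

variable (Γ : Network)

/-- the parameter interval `[0, ℓ_α]` of the edge `α` -/
def edge (α : Γ.ι) : Set ℝ := Icc 0 (Γ.ℓ α)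

/-- `α` is an edge adjacent to the vertex `i` -/
def incident (α : Γ.ι) (i : Γ.I) : Prop := Γ.e0 α = i ∨ Γ.e1 α = i

/-- the set `𝒜_i` of edges adjacent to the vertex `i` -/
def adj (i : Γ.I) : Finset Γ.ι := Finset.univ.filter fun α => Γ.incident α i

/-- the network is connected -/
def Conn : Prop :=
  ∀ i j : Γ.I, Relation.ReflTransGen (fun i j => ∃ α, Γ.incident α i ∧ Γ.incident α j) i j

/-- first derivative `∂ v_α` along the edge (one-sided at the endpoints) -/
def d1 (v : Γ.ι → ℝ → ℝ) (α : Γ.ι) : ℝ → ℝ := derivWithin (v α) (Γ.edge α)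

/-- second derivative `∂² v_α` along the edge -/
def d2 (v : Γ.ι → ℝ → ℝ) (α : Γ.ι) : ℝ → ℝ := derivWithin (Γ.d1 v α) (Γ.edge α)

/-- the value of `v` at the vertex `i` seen from the edge `α` -/
def valAt (v : Γ.ι → ℝ → ℝ) (α : Γ.ι) (i : Γ.I) : ℝ :=
  if Γ.e0 α = i then v α 0 else v α (Γ.ℓ α)

/-- the outward derivative `∂_α v (ν_i)` at the vertex `i` along the edge `α`:
`∂_α v(ν_i) = lim_{h→0⁺} (v_α(0) - v_α(h))/h` if `ν_i = π_α(0)` and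
`∂_α v(ν_i) = lim_{h→0⁺} (v_α(ℓ_α) - v_α(ℓ_α - h))/h` if `ν_i = π_α(ℓ_α)`. -/
def outDeriv (v : Γ.ι → ℝ → ℝ) (α : Γ.ι) (i : Γ.I) : ℝ :=
  if Γ.e0 α = i then -(Γ.d1 v α 0) else Γ.d1 v α (Γ.ℓ α)

/-- `v` is continuous at the vertices (values from adjacent edges agree) -/
def VertexCont (v : Γ.ι → ℝ → ℝ) : Prop :=
  ∀ i : Γ.I, ∀ α ∈ Γ.adj i, ∀ β ∈ Γ.adj i, Γ.valAt v α i = Γ.valAt v β i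

/-- `v ∈ C^m(Γ)` -/
def Cm (m : ℕ) (v : Γ.ι → ℝ → ℝ) : Prop :=
  (∀ α, ContDiffOn ℝ m (v α) (Γ.edge α)) ∧ Γ.VertexCont v

/-- sup norm of a function on the edge `α` -/
def esup (g : ℝ → ℝ) (α : Γ.ι) : ℝ := sSup ((fun y => |g y|) '' Γ.edge α)

/-- the `C²(Γ)` norm `‖v‖ = Σ_α Σ_{k ≤ 2} ‖∂^k v_α‖_∞` -/
def C2norm (v : Γ.ι → ℝ → ℝ) : ℝ :=
  ∑ α, (Γ.esup (v α) α + Γ.esup (Γ.d1 v α) α + Γ.esup (Γ.d2 v α) α)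

/-- the mean `⟨v⟩ = ∫_Γ v dx` -/
def avg (v : Γ.ι → ℝ → ℝ) : ℝ := ∑ α, ∫ y in (0:ℝ)..(Γ.ℓ α), v α y

end Network

/-- the `σ`-Hölder seminorm `[g]_{σ,s}` of `g` on the set `s` -/
def holderSemi (σ : ℝ) (g : ℝ → ℝ) (s : Set ℝ) : ℝ :=
  sSup {c | ∃ y ∈ s, ∃ z ∈ s, y ≠ z ∧ c = |g y - g z| / |y - z| ^ σ}

namespace Network

variable (Γ : Network)

/-- the `C^{2,θ}(Γ)` norm -/
def C2θnorm (θ : ℝ) (v : Γ.ι → ℝ → ℝ) : ℝ :=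
  Γ.C2norm v + ⨆ α, holderSemi θ (Γ.d2 v α) (Γ.edge α)

/-- classical solution of the discounted HJ problem on `Γ` with Hamiltonian `H` and discount
`lam`:  `-μ_α ∂²v + H_α(x, ∂v) + lam v = 0` inside every edge, together with the Kirchhoff
transmission condition `Σ_{α ∈ 𝒜_i} γ_{iα} μ_α ∂_α v(ν_i) = 0` at every vertex
(continuity at the vertices is part of `Γ.Cm 2 v`). -/
def IsDiscountedSol (μ : Γ.ι → ℝ) (γ : Γ.I → Γ.ι → ℝ) (H : Γ.ι → ℝ → ℝ → ℝ)
    (lam : ℝ) (v : Γ.ι → ℝ → ℝ) : Prop :=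
  Γ.Cm 2 v ∧
  (∀ α, ∀ y ∈ Ioo 0 (Γ.ℓ α),
    -(μ α) * Γ.d2 v α y + H α y (Γ.d1 v α y) + lam * v α y = 0) ∧
  (∀ i : Γ.I, ∑ α ∈ Γ.adj i, γ i α * μ α * Γ.outDeriv v α i = 0)

/-- classical solution of the ergodic HJ problem on `Γ` with Hamiltonian `H`:
`-μ_α ∂²v + H_α(x, ∂v) + ρ = 0` inside every edge, Kirchhoff condition at every vertex,
and the normalization `⟨v⟩ = 0`. -/
def IsErgodicSol (μ : Γ.ι → ℝ) (γ : Γ.I → Γ.ι → ℝ) (H : Γ.ι → ℝ → ℝ → ℝ)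
    (v : Γ.ι → ℝ → ℝ) (ρ : ℝ) : Prop :=
  Γ.Cm 2 v ∧
  (∀ α, ∀ y ∈ Ioo 0 (Γ.ℓ α),
    -(μ α) * Γ.d2 v α y + H α y (Γ.d1 v α y) + ρ = 0) ∧
  (∀ i : Γ.I, ∑ α ∈ Γ.adj i, γ i α * μ α * Γ.outDeriv v α i = 0) ∧
  Γ.avg v = 0

/-- assumption (H1): `μ_α > 0`, `γ_{iα} > 0` and `Σ_{α ∈ 𝒜_i} γ_{iα} μ_α = 1` -/
def H1cond (μ : Γ.ι → ℝ) (γ : Γ.I → Γ.ι → ℝ) : Prop :=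
  (∀ α, 0 < μ α) ∧ (∀ i : Γ.I, ∀ α ∈ Γ.adj i, 0 < γ i α) ∧
  (∀ i : Γ.I, ∑ α ∈ Γ.adj i, γ i α * μ α = 1)

end Network

/-- the Bellman Hamiltonian built from the control data `b`, `f`:
`H_α(x, p) = sup_{a ∈ A} { -b_α(x,a) p - f_α(x,a) }`. -/
def ham (Γ : Network) (A : Type) (b f : Γ.ι → ℝ → A → ℝ) (α : Γ.ι) (y p : ℝ) : ℝ :=
  ⨆ a : A, (-(b α y a) * p - f α y a)

/-- assumption (H2): `b_α, f_α : Γ_α × A → ℝ` continuous, bounded by `K`,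
and Lipschitz in `x` with constant `L`, uniformly in `a ∈ A` -/
def H2cond (Γ : Network) (A : Type) [TopologicalSpace A]
    (b f : Γ.ι → ℝ → A → ℝ) (K L : ℝ) : Prop :=
  ∀ α : Γ.ι,
    ContinuousOn (fun q : ℝ × A => b α q.1 q.2) (Γ.edge α ×ˢ (univ : Set A)) ∧
    ContinuousOn (fun q : ℝ × A => f α q.1 q.2) (Γ.edge α ×ˢ (univ : Set A)) ∧
    (∀ y ∈ Γ.edge α, ∀ a : A, |b α y a| ≤ K ∧ |f α y a| ≤ K) ∧
    (∀ y ∈ Γ.edge α, ∀ z ∈ Γ.edge α, ∀ a : A,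
      |b α y a - b α z a| ≤ L * |y - z| ∧ |f α y a - f α z a| ≤ L * |y - z|)

section LinearODE

variable {a b : ℝ} {f : ℝ → ℝ}

theorem constant_of_hasDerivAt_zero (hcont : ContinuousOn f (Icc a b))
    (hderiv : ∀ x ∈ Ioo a b, HasDerivAt f 0 x) : ∀ x ∈ Icc a b, f x = f a := by
  rw [← interior_Icc] at hderiv
  have hdiff : DifferentiableOn ℝ f (interior (Icc a b)) := fun x hx =>
    (hderiv x hx).differentiableAt.differentiableWithinAt
  have hzero : ∀ x ∈ interior (Icc a b), deriv f x = 0 := fun x hx => (hderiv x hx).deriv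
  intro x hx
  have ha : a ∈ Icc a b := left_mem_Icc.2 (hx.1.trans hx.2)
  exact le_antisymm
    (antitoneOn_of_deriv_nonpos (convex_Icc a b) hcont hdiff (fun y hy => (hzero y hy).le)
      ha hx hx.1)
    (monotoneOn_of_deriv_nonneg (convex_Icc a b) hcont hdiff (fun y hy => (hzero y hy).ge)
      ha hx hx.1)

theorem eq_mul_exp_integral_of_hasDerivAt {c w : ℝ → ℝ} (hc : Continuous c)
    (hw : ContinuousOn w (Icc a b)) (hderiv : ∀ y ∈ Ioo a b, HasDerivAt w (c y * w y) y) :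
    ∀ y ∈ Icc a b, w y = w a * Real.exp (∫ t in a..y, c t) := by
  set G : ℝ → ℝ := fun y => ∫ t in a..y, c t
  have hG : ∀ y, HasDerivAt G (c y) y := fun y => (hc.integral_hasStrictDerivAt a y).hasDerivAt
  -- the integrating factor `exp (-G)` turns `w' = c w` into `(w exp (-G))' = 0`
  have hconst := constant_of_hasDerivAt_zero (f := fun y => w y * Real.exp (-G y))
    (hw.mul (Real.continuous_exp.comp (continuous_iff_continuousAt.2
      fun y => (hG y).continuousAt).neg).continuousOn)
    (fun y hy => ((hderiv y hy).mul (hG y).neg.exp).congr_deriv (by ring))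
  intro y hy
  have h := hconst y hy
  simp only [G, intervalIntegral.integral_same, neg_zero, Real.exp_zero, mul_one,
    Real.exp_neg] at h
  rw [← h, mul_assoc, inv_mul_cancel₀ (Real.exp_pos _).ne', mul_one]

def SignConstOn (w : ℝ → ℝ) (s : Set ℝ) : Prop :=
  ∀ y ∈ s, ∀ z ∈ s, SignType.sign (w y) = SignType.sign (w z)

theorem signConstOn_of_hasDerivAt_eq_mul {c w : ℝ → ℝ} (hc : ContinuousOn c (Icc a b))
    (hw : ContinuousOn w (Icc a b)) (hderiv : ∀ y ∈ Ioo a b, HasDerivAt w (c y * w y) y) :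
    SignConstOn w (Icc a b) := by
  suffices h : ∀ y ∈ Icc a b, SignType.sign (w y) = SignType.sign (w a) from
    fun y hy z hz => (h y hy).trans (h z hz).symm
  intro y hy
  have hab : a ≤ b := hy.1.trans hy.2
  have hext : Continuous (IccExtend hab ((Icc a b).domRestrict c)) :=
    continuous_IccExtend_iff.2 hc.domRestrict
  have hsol := eq_mul_exp_integral_of_hasDerivAt hext hw fun z hz => by
    rw [IccExtend_of_mem hab _ (Ioo_subset_Icc_self hz), Set.domRestrict_apply]
    exact hderiv z hz
  rw [hsol y hy, sign_mul, sign_pos (Real.exp_pos _), mul_one]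

end LinearODE

section SecondOrder

variable {a b : ℝ} {f : ℝ → ℝ}

theorem signConstOn_derivWithin_of_ode {μ : ℝ} {g : ℝ → ℝ} (hab : a < b) (hμ : μ ≠ 0)
    (hg : ContinuousOn g (Icc a b)) (hf : ContDiffOn ℝ 2 f (Icc a b))
    (hode : ∀ y ∈ Ioo a b, -μ * derivWithin (derivWithin f (Icc a b)) (Icc a b) y
      + g y * derivWithin f (Icc a b) y = 0) :
    SignConstOn (derivWithin f (Icc a b)) (Icc a b) := by
  set w := derivWithin f (Icc a b)
  have hw : ContDiffOn ℝ 1 w (Icc a b) := hf.derivWithin (uniqueDiffOn_Icc hab) (by norm_num)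
  refine signConstOn_of_hasDerivAt_eq_mul (c := fun y => g y / μ) (hg.div_const μ)
    hw.continuousOn fun y hy => ?_
  have hw' := ((hw.differentiableOn one_ne_zero y (Ioo_subset_Icc_self hy)).hasDerivWithinAt
    ).hasDerivAt (Icc_mem_nhds hy.1 hy.2)
  refine hw'.congr_deriv ?_
  field_simp
  linarith [hode y hy]

theorem SignConstOn.constant_of_derivWithin_eq_zero
    (hsign : SignConstOn (derivWithin f (Icc a b)) (Icc a b))
    (hf : DifferentiableOn ℝ f (Icc a b)) {z : ℝ} (hz : z ∈ Icc a b)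
    (h : derivWithin f (Icc a b) z = 0) : ∀ y ∈ Icc a b, f y = f a :=
  constant_of_derivWithin_zero hf fun y hy => by
    rw [← sign_eq_zero_iff, hsign y (Ico_subset_Icc_self hy) z hz, h, sign_zero]

theorem SignConstOn.lt_of_derivWithin_pos
    (hsign : SignConstOn (derivWithin f (Icc a b)) (Icc a b)) (hab : a < b)
    (hf : DifferentiableOn ℝ f (Icc a b)) {z : ℝ} (hz : z ∈ Icc a b)
    (h : 0 < derivWithin f (Icc a b) z) : f a < f b := by
  refine strictMonoOn_of_deriv_pos (convex_Icc a b) hf.continuousOn (fun y hy => ?_)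
    (left_mem_Icc.2 hab.le) (right_mem_Icc.2 hab.le) hab
  rw [← derivWithin_of_mem_nhds (mem_interior_iff_mem_nhds.1 hy), ← sign_eq_one_iff,
    hsign y (interior_subset hy) z hz, sign_pos h]

theorem SignConstOn.lt_of_derivWithin_neg
    (hsign : SignConstOn (derivWithin f (Icc a b)) (Icc a b)) (hab : a < b)
    (hf : DifferentiableOn ℝ f (Icc a b)) {z : ℝ} (hz : z ∈ Icc a b)
    (h : derivWithin f (Icc a b) z < 0) : f b < f a := by
  refine strictAntiOn_of_deriv_neg (convex_Icc a b) hf.continuousOn (fun y hy => ?_)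
    (left_mem_Icc.2 hab.le) (right_mem_Icc.2 hab.le) hab
  rw [← derivWithin_of_mem_nhds (mem_interior_iff_mem_nhds.1 hy), ← sign_eq_neg_one_iff,
    hsign y (interior_subset hy) z hz, sign_neg h]

end SecondOrder

theorem eq_zero_of_sum_mul_eq_zero {ι R : Type*} [Ring R] [LinearOrder R]
    [IsStrictOrderedRing R] {s : Finset ι} {c x : ι → R} (hc : ∀ i ∈ s, 0 < c i)
    (hx : ∀ i ∈ s, 0 ≤ x i) (h : ∑ i ∈ s, c i * x i = 0) : ∀ i ∈ s, x i = 0 := fun i hi =>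
  (mul_eq_zero.1 ((Finset.sum_eq_zero_iff_of_nonneg fun j hj =>
    mul_nonneg (hc j hj).le (hx j hj)).1 h i hi)).resolve_left (hc i hi).ne'

namespace Network

variable {Γ : Network} {v : Γ.ι → ℝ → ℝ} {α : Γ.ι} {i : Γ.I}

theorem mem_adj : α ∈ Γ.adj i ↔ Γ.incident α i := by
  simp [adj]

theorem zero_mem_edge (α : Γ.ι) : (0 : ℝ) ∈ Γ.edge α := left_mem_Icc.2 (Γ.ℓ_pos α).le

theorem ℓ_mem_edge (α : Γ.ι) : Γ.ℓ α ∈ Γ.edge α := right_mem_Icc.2 (Γ.ℓ_pos α).le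

@[simp] theorem valAt_e0 : Γ.valAt v α (Γ.e0 α) = v α 0 := if_pos rfl

@[simp] theorem valAt_e1 : Γ.valAt v α (Γ.e1 α) = v α (Γ.ℓ α) := if_neg (Γ.no_loop α)

@[simp] theorem outDeriv_e0 : Γ.outDeriv v α (Γ.e0 α) = -Γ.d1 v α 0 := if_pos rfl

@[simp] theorem outDeriv_e1 : Γ.outDeriv v α (Γ.e1 α) = Γ.d1 v α (Γ.ℓ α) :=
  if_neg (Γ.no_loop α)

theorem exists_mem_edge_valAt_eq (α : Γ.ι) (i : Γ.I) :
    ∃ y ∈ Γ.edge α, Γ.valAt v α i = v α y := by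
  unfold valAt
  split_ifs
  exacts [⟨0, Γ.zero_mem_edge α, rfl⟩, ⟨Γ.ℓ α, Γ.ℓ_mem_edge α, rfl⟩]

theorem outDeriv_nonneg (hsign : SignConstOn (Γ.d1 v α) (Γ.edge α))
    (hv : DifferentiableOn ℝ (v α) (Γ.edge α)) (hi : Γ.incident α i)
    (h0 : v α 0 ≤ Γ.valAt v α i) (hℓ : v α (Γ.ℓ α) ≤ Γ.valAt v α i) :
    0 ≤ Γ.outDeriv v α i := by
  rcases hi with rfl | rfl
  · rw [valAt_e0] at hℓ
    rw [outDeriv_e0, neg_nonneg]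
    exact not_lt.1 fun h => (hℓ.trans_lt
      (hsign.lt_of_derivWithin_pos (Γ.ℓ_pos α) hv (Γ.zero_mem_edge α) h)).false
  · rw [valAt_e1] at h0
    rw [outDeriv_e1]
    exact not_lt.1 fun h => (h0.trans_lt
      (hsign.lt_of_derivWithin_neg (Γ.ℓ_pos α) hv (Γ.ℓ_mem_edge α) h)).false

theorem eq_valAt_of_outDeriv_eq_zero (hsign : SignConstOn (Γ.d1 v α) (Γ.edge α))
    (hv : DifferentiableOn ℝ (v α) (Γ.edge α)) (hi : Γ.incident α i)
    (h : Γ.outDeriv v α i = 0) : ∀ y ∈ Γ.edge α, v α y = Γ.valAt v α i := by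
  rcases hi with rfl | rfl
  · rw [outDeriv_e0, neg_eq_zero] at h
    rw [valAt_e0]
    exact hsign.constant_of_derivWithin_eq_zero hv (Γ.zero_mem_edge α) h
  · rw [outDeriv_e1] at h
    have hconst := hsign.constant_of_derivWithin_eq_zero hv (Γ.ℓ_mem_edge α) h
    intro y hy
    rw [valAt_e1, hconst y hy, hconst _ (Γ.ℓ_mem_edge α)]

variable {μ : Γ.ι → ℝ} {γ : Γ.I → Γ.ι → ℝ}

theorem eq_max_on_adj (hcont : Γ.VertexCont v)
    (hsign : ∀ α, SignConstOn (Γ.d1 v α) (Γ.edge α))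
    (hv : ∀ α, DifferentiableOn ℝ (v α) (Γ.edge α)) (hw : ∀ α ∈ Γ.adj i, 0 < γ i α * μ α)
    (hkirch : ∑ α ∈ Γ.adj i, γ i α * μ α * Γ.outDeriv v α i = 0) {M : ℝ}
    (hM : ∀ α, v α 0 ≤ M ∧ v α (Γ.ℓ α) ≤ M) {β : Γ.ι} (hβ : β ∈ Γ.adj i)
    (hβM : Γ.valAt v β i = M) : ∀ α ∈ Γ.adj i, ∀ y ∈ Γ.edge α, v α y = M := by
  have hval : ∀ α ∈ Γ.adj i, Γ.valAt v α i = M := fun α hα =>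
    (hcont i α hα β hβ).trans hβM
  have hnonneg : ∀ α ∈ Γ.adj i, 0 ≤ Γ.outDeriv v α i := fun α hα =>
    outDeriv_nonneg (hsign α) (hv α) (mem_adj.1 hα) ((hval α hα).symm ▸ (hM α).1)
      ((hval α hα).symm ▸ (hM α).2)
  have hzero := eq_zero_of_sum_mul_eq_zero hw hnonneg hkirch
  intro α hα y hy
  rw [← hval α hα]
  exact eq_valAt_of_outDeriv_eq_zero (hsign α) (hv α) (mem_adj.1 hα) (hzero α hα) y hy

theorem exists_const_of_kirchhoff (hconn : Γ.Conn) (hcont : Γ.VertexCont v)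
    (hsign : ∀ α, SignConstOn (Γ.d1 v α) (Γ.edge α))
    (hv : ∀ α, DifferentiableOn ℝ (v α) (Γ.edge α))
    (hw : ∀ i, ∀ α ∈ Γ.adj i, 0 < γ i α * μ α)
    (hkirch : ∀ i, ∑ α ∈ Γ.adj i, γ i α * μ α * Γ.outDeriv v α i = 0) :
    ∃ c, ∀ α, ∀ y ∈ Γ.edge α, v α y = c := by
  cases isEmpty_or_nonempty Γ.ι
  · exact ⟨0, fun α => isEmptyElim α⟩
  obtain ⟨α₀, hα₀⟩ := Finite.exists_max fun α => max (v α 0) (v α (Γ.ℓ α))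
  set M := max (v α₀ 0) (v α₀ (Γ.ℓ α₀))
  have hM : ∀ α, v α 0 ≤ M ∧ v α (Γ.ℓ α) ≤ M := fun α => max_le_iff.1 (hα₀ α)
  have hstep : ∀ i, (∃ β ∈ Γ.adj i, Γ.valAt v β i = M) →
      ∀ α ∈ Γ.adj i, ∀ y ∈ Γ.edge α, v α y = M := fun i ⟨β, hβ, hβM⟩ =>
    eq_max_on_adj hcont hsign hv (hw i) (hkirch i) hM hβ hβM
  obtain ⟨i₀, hi₀⟩ : ∃ i₀, ∃ β ∈ Γ.adj i₀, Γ.valAt v β i₀ = M := by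
    rcases max_choice (v α₀ 0) (v α₀ (Γ.ℓ α₀)) with h | h
    · exact ⟨Γ.e0 α₀, α₀, mem_adj.2 (Or.inl rfl), by rw [valAt_e0, ← h]⟩
    · exact ⟨Γ.e1 α₀, α₀, mem_adj.2 (Or.inr rfl), by rw [valAt_e1, ← h]⟩
  have hall : ∀ j, ∃ β ∈ Γ.adj j, Γ.valAt v β j = M := fun j => by
    induction hconn i₀ j with
    | refl => exact hi₀
    | tail _ hbc ih =>
      obtain ⟨α, hb, hc⟩ := hbc
      obtain ⟨y, hy, hval⟩ := exists_mem_edge_valAt_eq (v := v) α _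
      exact ⟨α, mem_adj.2 hc, hval.trans (hstep _ ih α (mem_adj.2 hb) y hy)⟩
  exact ⟨M, fun α => hstep _ (hall (Γ.e0 α)) α (mem_adj.2 (Or.inl rfl))⟩

@[simp] theorem d1_const (c : ℝ) (α : Γ.ι) : Γ.d1 (fun _ _ => c) α = 0 :=
  derivWithin_fun_const _ _

@[simp] theorem d2_const (c : ℝ) (α : Γ.ι) : Γ.d2 (fun _ _ => c) α = 0 := by
  simp only [d2, d1_const]
  exact derivWithin_zero _

theorem cm_const (m : ℕ) (c : ℝ) : Γ.Cm m (fun _ _ => c) :=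
  ⟨fun _ => contDiffOn_const, fun _ _ _ _ _ => by simp [valAt]⟩

@[simp] theorem outDeriv_const (c : ℝ) (α : Γ.ι) (i : Γ.I) :
    Γ.outDeriv (fun _ _ => c) α i = 0 := by
  simp [outDeriv]

end Network

/-- Lemma 3.2, strong maximum principle on a network.
Assume (H1) and let `Γ` be connected. Let `g : Γ → ℝ` be piecewise continuous
(`g_α ∈ C([0,ℓ_α])` for every `α`). If `v ∈ C²(Γ)` satisfies `-μ_α ∂²v + g ∂v = 0` on
`Γ_α∖𝒱` for every `α ∈ 𝒜` and the Kirchhoff condition at every vertex, then `v` is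
constant on `Γ`; conversely, every constant function satisfies this problem. -/
theorem strong_maximum_principle_network
    (Γ : Network) (hconn : Γ.Conn)
    (μ : Γ.ι → ℝ) (γ : Γ.I → Γ.ι → ℝ) (hH1 : Γ.H1cond μ γ)
    (g : Γ.ι → ℝ → ℝ) (hg : ∀ α, ContinuousOn (g α) (Γ.edge α)) :
    (∀ v : Γ.ι → ℝ → ℝ, Γ.Cm 2 v →
      (∀ α, ∀ y ∈ Ioo 0 (Γ.ℓ α), -(μ α) * Γ.d2 v α y + g α y * Γ.d1 v α y = 0) →
      (∀ i : Γ.I, ∑ α ∈ Γ.adj i, γ i α * μ α * Γ.outDeriv v α i = 0) →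
      ∃ c : ℝ, ∀ α, ∀ y ∈ Γ.edge α, v α y = c) ∧
    (∀ c : ℝ,
      Γ.Cm 2 (fun _ _ => c) ∧
      (∀ α, ∀ y ∈ Ioo 0 (Γ.ℓ α),
        -(μ α) * Γ.d2 (fun _ _ => c) α y + g α y * Γ.d1 (fun _ _ => c) α y = 0) ∧
      (∀ i : Γ.I, ∑ α ∈ Γ.adj i, γ i α * μ α * Γ.outDeriv (fun _ _ => c) α i = 0)) := by
  obtain ⟨hμ, hγ, -⟩ := hH1
  refine ⟨fun v hv hode hkirch => ?_, fun c => ⟨Γ.cm_const 2 c, by simp, by simp⟩⟩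
  exact Γ.exists_const_of_kirchhoff hconn hv.2
    (fun α => signConstOn_derivWithin_of_ode (Γ.ℓ_pos α) (hμ α).ne' (hg α) (hv.1 α) (hode α))
    (fun α => (hv.1 α).differentiableOn two_ne_zero)
    (fun i α hα => mul_pos (hγ i α hα) (hμ α)) hkirch
end
end

section
/- Comparison principle for the discounted HJ equation on a network: assume (H1)–(H2) and let λ ∈ (0,1). If u, v ∈ C²(Γ) satisfy −μ_α ∂²v + H_α(x,∂v) + λv ≥ −μ_α ∂²u + H_α(x,∂u) + λu pointwise on Γ_α∖𝒱 for every α ∈ 𝒜, and Σ_{α∈𝒜_i} γ_{iα} μ_α ∂_α v(ν_i) ≥ Σ_{α∈𝒜_i} γ_{iα} μ_α ∂_α u(ν_i) at every vertex ν_i, then v ≥ u on Γ. -/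
/-!
Suppose `w = u - v` has a positive maximum `M`, attained at `t` on the edge `α`. At an interior
point `w'(t) = 0`; at a vertex every outward derivative of `w` is `≥ 0` by maximality, and the
Kirchhoff inequality with positive weights `γ_{iβ} μ_β` forces all of them to vanish. Since `H_α`
is `K`-Lipschitz in `p`, `w` satisfies `λ w ≤ μ_α w'' + K |w'|` inside the edge, so near `t`
(where `w ≈ M > 0` and `w' ≈ 0`) we get `w'' > 0`. Together with `w'(t) = 0` this makes `w`
strictly increase as one moves from `t` into the edge, contradicting maximality.
-/

open scoped Classical
open Set MeasureTheory

noncomputable section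

open Topology

theorem Finset.eq_zero_of_sum_mul_nonpos {ι R : Type*} [CommRing R] [LinearOrder R]
    [IsStrictOrderedRing R] {s : Finset ι} {c x : ι → R} (hc : ∀ i ∈ s, 0 < c i)
    (hx : ∀ i ∈ s, 0 ≤ x i) (hsum : ∑ i ∈ s, c i * x i ≤ 0) : ∀ i ∈ s, x i = 0 := by
  have hnn : ∀ i ∈ s, 0 ≤ c i * x i := fun i hi => mul_nonneg (hc i hi).le (hx i hi)
  intro i hi
  have := (Finset.sum_eq_zero_iff_of_nonneg hnn).1 (hsum.antisymm (Finset.sum_nonneg hnn)) i hi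
  exact (mul_eq_zero.1 this).resolve_left (hc i hi).ne'

theorem exists_forall_le_of_isCompact_of_finite {ι X β : Type*} [Finite ι] [Nonempty ι]
    [TopologicalSpace X] [LinearOrder β] [TopologicalSpace β] [ClosedIciTopology β]
    {s : ι → Set X} {f : ι → X → β} (hs : ∀ i, IsCompact (s i)) (hne : ∀ i, (s i).Nonempty)
    (hf : ∀ i, ContinuousOn (f i) (s i)) : ∃ i, ∃ x ∈ s i, ∀ j, ∀ y ∈ s j, f j y ≤ f i x := by
  choose x hx hmax using fun i => (hs i).exists_isMaxOn (hne i) (hf i)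
  obtain ⟨i, hi⟩ := Finite.exists_max fun j => f j (x j)
  exact ⟨i, x i, hx i, fun j y hy => (hmax j hy).trans (hi j)⟩

section Endpoint

variable {g : ℝ → ℝ} {g' a b : ℝ}

theorem IsMaxOn.hasDerivWithinAt_Icc_left_nonpos (hab : a < b) (hmax : IsMaxOn g (Icc a b) a)
    (hg : HasDerivWithinAt g g' (Icc a b) a) : g' ≤ 0 := by
  have hcone : b - a ∈ posTangentConeAt (Icc a b) a :=
    sub_mem_posTangentConeAt_of_segment_subset (segment_eq_Icc hab.le).subset
  have := hmax.localize.hasFDerivWithinAt_nonpos hg.hasFDerivWithinAt hcone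
  simp only [ContinuousLinearMap.toSpanSingleton_apply, smul_eq_mul] at this
  exact nonpos_of_mul_nonpos_right this (sub_pos.2 hab)

theorem IsMaxOn.hasDerivWithinAt_Icc_right_nonneg (hab : a < b) (hmax : IsMaxOn g (Icc a b) b)
    (hg : HasDerivWithinAt g g' (Icc a b) b) : 0 ≤ g' := by
  have hcone : a - b ∈ posTangentConeAt (Icc a b) b :=
    sub_mem_posTangentConeAt_of_segment_subset (by rw [segment_symm, segment_eq_Icc hab.le])
  have := hmax.localize.hasFDerivWithinAt_nonpos hg.hasFDerivWithinAt hcone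
  simp only [ContinuousLinearMap.toSpanSingleton_apply, smul_eq_mul] at this
  exact nonneg_of_mul_nonpos_right this (sub_neg.2 hab)

end Endpoint

section DiffIneq

variable {w w' w'' : ℝ → ℝ} {a b μ lam K : ℝ}

theorem lt_of_deriv_eq_zero_of_deriv2_pos (hab : a < b)
    (hw : ∀ y ∈ Icc a b, HasDerivWithinAt w (w' y) (Icc a b) y)
    (hw' : ∀ y ∈ Icc a b, HasDerivWithinAt w' (w'' y) (Icc a b) y)
    (hw'a : w' a = 0) (hpos : ∀ y ∈ Ioo a b, 0 < w'' y) : w a < w b := by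
  have hw'_mono : StrictMonoOn w' (Icc a b) :=
    strictMonoOn_of_hasDerivWithinAt_pos (convex_Icc a b)
      (fun y hy => (hw' y hy).continuousWithinAt)
      (fun y hy => by
        rw [interior_Icc] at hy ⊢
        exact (hw' y (Ioo_subset_Icc_self hy)).mono Ioo_subset_Icc_self)
      (by rwa [interior_Icc])
  have hw_mono : StrictMonoOn w (Icc a b) :=
    strictMonoOn_of_hasDerivWithinAt_pos (convex_Icc a b)
      (fun y hy => (hw y hy).continuousWithinAt)
      (fun y hy => by
        rw [interior_Icc] at hy ⊢
        exact (hw y (Ioo_subset_Icc_self hy)).mono Ioo_subset_Icc_self)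
      (fun y hy => by
        rw [interior_Icc] at hy
        exact hw'a ▸ hw'_mono (left_mem_Icc.2 hab.le) (Ioo_subset_Icc_self hy) hy.1)
  exact hw_mono (left_mem_Icc.2 hab.le) (right_mem_Icc.2 hab.le) hab

theorem not_isMaxOn_Icc_left_of_diffIneq (hab : a < b) (hμ : 0 < μ) (hlam : 0 < lam)
    (hw : ∀ y ∈ Icc a b, HasDerivWithinAt w (w' y) (Icc a b) y)
    (hw' : ∀ y ∈ Icc a b, HasDerivWithinAt w' (w'' y) (Icc a b) y)
    (hineq : ∀ y ∈ Ioo a b, lam * w y ≤ μ * w'' y + K * |w' y|)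
    (hwa : 0 < w a) (hw'a : w' a = 0) : ¬ IsMaxOn w (Icc a b) a := by
  have ha : a ∈ Icc a b := left_mem_Icc.2 hab.le
  have hcont : ContinuousWithinAt (fun y => lam * w y - K * |w' y|) (Icc a b) a :=
    ((hw a ha).continuousWithinAt.const_mul lam).sub
      ((hw' a ha).continuousWithinAt.abs.const_mul K)
  have hnear : ∀ᶠ y in 𝓝[>] a, 0 < lam * w y - K * |w' y| := by
    have := hcont.eventually_const_lt (by simpa [hw'a] using mul_pos hlam hwa)
    rw [nhdsWithin_Icc_eq_nhdsGE hab] at this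
    exact nhdsWithin_mono _ Ioi_subset_Ici_self this
  obtain ⟨c, hc, hsub⟩ := (mem_nhdsGT_iff_exists_mem_Ioc_Ioo_subset hab).1 hnear
  have hsub_ab : Icc a c ⊆ Icc a b := Icc_subset_Icc_right hc.2
  have hlt : w a < w c :=
    lt_of_deriv_eq_zero_of_deriv2_pos hc.1
      (fun y hy => (hw y (hsub_ab hy)).mono hsub_ab)
      (fun y hy => (hw' y (hsub_ab hy)).mono hsub_ab) hw'a
      (fun y hy => pos_of_mul_pos_right
        ((hsub hy).out.trans_le (by linarith [hineq y ⟨hy.1, hy.2.trans_le hc.2⟩])) hμ.le)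
  exact fun hmax => (hmax ⟨hc.1.le, hc.2⟩).not_gt hlt

theorem not_isMaxOn_Icc_right_of_diffIneq (hab : a < b) (hμ : 0 < μ) (hlam : 0 < lam)
    (hw : ∀ y ∈ Icc a b, HasDerivWithinAt w (w' y) (Icc a b) y)
    (hw' : ∀ y ∈ Icc a b, HasDerivWithinAt w' (w'' y) (Icc a b) y)
    (hineq : ∀ y ∈ Ioo a b, lam * w y ≤ μ * w'' y + K * |w' y|)
    (hwb : 0 < w b) (hw'b : w' b = 0) : ¬ IsMaxOn w (Icc a b) b := by
  have hmaps : MapsTo Neg.neg (Icc (-b) (-a)) (Icc a b) :=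
    fun y hy => ⟨le_neg.1 hy.2, neg_le.1 hy.1⟩
  have hreflected := not_isMaxOn_Icc_left_of_diffIneq (w := fun y => w (-y))
    (w' := fun y => -w' (-y)) (w'' := fun y => w'' (-y)) (neg_lt_neg hab) hμ hlam
    (fun y hy => by
      simpa [Function.comp_def] using (hw (-y) (hmaps hy)).comp y (hasDerivWithinAt_neg y _) hmaps)
    (fun y hy => by
      simpa [Function.comp_def, Pi.neg_def] using ((hw' (-y) (hmaps hy)).comp y (hasDerivWithinAt_neg y _) hmaps).neg)
    (fun y hy => by simpa using hineq (-y) ⟨lt_neg.1 hy.2, neg_lt.1 hy.1⟩)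
    (by simpa using hwb) (by simp [hw'b])
  exact fun hmax => hreflected fun y hy => by simpa using hmax (hmaps hy)

theorem not_isMaxOn_Icc_of_diffIneq (hab : a < b) (hμ : 0 < μ) (hlam : 0 < lam)
    (hw : ∀ y ∈ Icc a b, HasDerivWithinAt w (w' y) (Icc a b) y)
    (hw' : ∀ y ∈ Icc a b, HasDerivWithinAt w' (w'' y) (Icc a b) y)
    (hineq : ∀ y ∈ Ioo a b, lam * w y ≤ μ * w'' y + K * |w' y|)
    {t : ℝ} (ht : t ∈ Icc a b) (hwt : 0 < w t) (hw't : w' t = 0) : ¬ IsMaxOn w (Icc a b) t := by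
  rcases ht.2.lt_or_eq with htb | rfl
  · have hsub : Icc t b ⊆ Icc a b := Icc_subset_Icc_left ht.1
    exact fun hmax => not_isMaxOn_Icc_left_of_diffIneq htb hμ hlam
      (fun y hy => (hw y (hsub hy)).mono hsub) (fun y hy => (hw' y (hsub hy)).mono hsub)
      (fun y hy => hineq y ⟨ht.1.trans_lt hy.1, hy.2⟩) hwt hw't (hmax.on_subset hsub)
  · exact not_isMaxOn_Icc_right_of_diffIneq hab hμ hlam hw hw' hineq hwt hw't

end DiffIneq

theorem ham_le_add_mul_abs_sub {Γ : Network} {A : Type} [Nonempty A] {b f : Γ.ι → ℝ → A → ℝ}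
    {K : ℝ} {α : Γ.ι} {y : ℝ} (hbf : ∀ a, |b α y a| ≤ K ∧ |f α y a| ≤ K) (p q : ℝ) :
    ham Γ A b f α y p ≤ ham Γ A b f α y q + K * |p - q| := by
  have hb : ∀ a r, -(b α y a) * r ≤ K * |r| := fun a r =>
    (le_abs_self _).trans (by
      rw [abs_mul, abs_neg]
      exact mul_le_mul_of_nonneg_right (hbf a).1 (abs_nonneg r))
  have hbdd : BddAbove (range fun a => -(b α y a) * q - f α y a) :=
    ⟨K * |q| + K, forall_mem_range.2 fun a => by
      linarith [hb a q, neg_abs_le (f α y a), (hbf a).2]⟩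
  unfold ham
  refine ciSup_le fun a => ?_
  have hsplit : -(b α y a) * p = -(b α y a) * q + -(b α y a) * (p - q) := by ring
  linarith [le_ciSup hbdd a, hb a (p - q)]

namespace Network

variable {Γ : Network} {u v : Γ.ι → ℝ → ℝ} {α : Γ.ι} {y : ℝ}

theorem hasDerivWithinAt_d1 (hv : ContDiffOn ℝ 1 (v α) (Γ.edge α)) (hy : y ∈ Γ.edge α) :
    HasDerivWithinAt (v α) (Γ.d1 v α y) (Γ.edge α) y :=
  (hv.differentiableOn one_ne_zero y hy).hasDerivWithinAt

theorem hasDerivWithinAt_d2 (hv : ContDiffOn ℝ 2 (v α) (Γ.edge α)) (hy : y ∈ Γ.edge α) :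
    HasDerivWithinAt (Γ.d1 v α) (Γ.d2 v α y) (Γ.edge α) y :=
  hasDerivWithinAt_d1 (hv.derivWithin (uniqueDiffOn_Icc (Γ.ℓ_pos α)) le_rfl) hy

theorem outDeriv_sub_nonneg_of_isMaxOn {i : Γ.I}
    (hw : ∀ y ∈ Γ.edge α, HasDerivWithinAt (fun z => u α z - v α z)
      (Γ.d1 u α y - Γ.d1 v α y) (Γ.edge α) y)
    (hmax : ∀ y ∈ Γ.edge α, u α y - v α y ≤ Γ.valAt u α i - Γ.valAt v α i) :
    0 ≤ Γ.outDeriv u α i - Γ.outDeriv v α i := by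
  have hℓ := Γ.ℓ_pos α
  unfold outDeriv
  unfold valAt at hmax
  by_cases h0 : Γ.e0 α = i
  · simp only [h0, if_true] at hmax ⊢
    have := IsMaxOn.hasDerivWithinAt_Icc_left_nonpos hℓ (isMaxOn_iff.2 hmax)
      (hw 0 (left_mem_Icc.2 hℓ.le))
    linarith
  · simp only [h0, if_false] at hmax ⊢
    have := IsMaxOn.hasDerivWithinAt_Icc_right_nonneg hℓ (isMaxOn_iff.2 hmax)
      (hw _ (right_mem_Icc.2 hℓ.le))
    linarith

theorem outDeriv_eq_of_isMaxOn_vertex {μ : Γ.ι → ℝ} {γ : Γ.I → Γ.ι → ℝ} (hH1 : Γ.H1cond μ γ)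
    (hu : Γ.VertexCont u) (hv : Γ.VertexCont v) {i : Γ.I}
    (hkir : ∑ β ∈ Γ.adj i, γ i β * μ β * Γ.outDeriv u β i ≤
      ∑ β ∈ Γ.adj i, γ i β * μ β * Γ.outDeriv v β i)
    (hw : ∀ β, ∀ y ∈ Γ.edge β, HasDerivWithinAt (fun z => u β z - v β z)
      (Γ.d1 u β y - Γ.d1 v β y) (Γ.edge β) y)
    {M : ℝ} (hmax : ∀ β, ∀ y ∈ Γ.edge β, u β y - v β y ≤ M) (hα : α ∈ Γ.adj i)
    (hM : Γ.valAt u α i - Γ.valAt v α i = M) :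
    ∀ β ∈ Γ.adj i, Γ.outDeriv u β i = Γ.outDeriv v β i := by
  have hnonneg : ∀ β ∈ Γ.adj i, 0 ≤ Γ.outDeriv u β i - Γ.outDeriv v β i :=
    fun β hβ => outDeriv_sub_nonneg_of_isMaxOn (hw β) fun y hy => by
      rw [← hu i α hα β hβ, ← hv i α hα β hβ, hM]
      exact hmax β y hy
  have hsum : ∑ β ∈ Γ.adj i, γ i β * μ β * (Γ.outDeriv u β i - Γ.outDeriv v β i) ≤ 0 := by
    simp only [mul_sub, Finset.sum_sub_distrib]
    linarith
  exact fun β hβ => sub_eq_zero.1 <| Finset.eq_zero_of_sum_mul_nonpos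
    (fun β hβ => mul_pos (hH1.2.1 i β hβ) (hH1.1 β)) hnonneg hsum β hβ

theorem d1_sub_eq_zero_of_isMaxOn {μ : Γ.ι → ℝ} {γ : Γ.I → Γ.ι → ℝ} (hH1 : Γ.H1cond μ γ)
    (hu : Γ.VertexCont u) (hv : Γ.VertexCont v)
    (hkir : ∀ i : Γ.I, ∑ β ∈ Γ.adj i, γ i β * μ β * Γ.outDeriv u β i ≤
      ∑ β ∈ Γ.adj i, γ i β * μ β * Γ.outDeriv v β i)
    (hw : ∀ β, ∀ y ∈ Γ.edge β, HasDerivWithinAt (fun z => u β z - v β z)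
      (Γ.d1 u β y - Γ.d1 v β y) (Γ.edge β) y)
    {t : ℝ} (ht : t ∈ Γ.edge α) (hmax : ∀ β, ∀ y ∈ Γ.edge β, u β y - v β y ≤ u α t - v α t) :
    Γ.d1 u α t - Γ.d1 v α t = 0 := by
  rcases ht.1.eq_or_lt with rfl | h0
  · have hα : α ∈ Γ.adj (Γ.e0 α) := Finset.mem_filter.2 ⟨Finset.mem_univ _, Or.inl rfl⟩
    have := outDeriv_eq_of_isMaxOn_vertex hH1 hu hv (hkir _) hw hmax hα (by simp [valAt]) α hα
    simp only [outDeriv, if_true, neg_inj] at this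
    rw [this, sub_self]
  rcases ht.2.eq_or_lt with rfl | hℓ
  · have hα : α ∈ Γ.adj (Γ.e1 α) := Finset.mem_filter.2 ⟨Finset.mem_univ _, Or.inr rfl⟩
    have hne := Γ.no_loop α
    have := outDeriv_eq_of_isMaxOn_vertex hH1 hu hv (hkir _) hw hmax hα
      (by simp [valAt, hne]) α hα
    simp only [outDeriv, hne, if_false] at this
    rw [this, sub_self]
  · exact ((isMaxOn_iff.2 fun y hy => hmax α y hy).isLocalMax (Icc_mem_nhds h0 hℓ)).hasDerivAt_eq_zero
      ((hw α t ht).hasDerivAt (Icc_mem_nhds h0 hℓ))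

end Network

theorem comparison_principle_network_general
    (Γ : Network)
    (μ : Γ.ι → ℝ) (γ : Γ.I → Γ.ι → ℝ)
    (A : Type) [MetricSpace A] [Nonempty A]
    (b f : Γ.ι → ℝ → A → ℝ) (K L : ℝ)
    (hH1 : Γ.H1cond μ γ) (hH2 : H2cond Γ A b f K L)
    (lam : ℝ) (hlam : lam ∈ Ioo (0:ℝ) 1)
    (u v : Γ.ι → ℝ → ℝ) (hu : Γ.Cm 2 u) (hv : Γ.Cm 2 v)
    (hineq : ∀ α, ∀ y ∈ Ioo 0 (Γ.ℓ α),
      -(μ α) * Γ.d2 u α y + ham Γ A b f α y (Γ.d1 u α y) + lam * u α y ≤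
      -(μ α) * Γ.d2 v α y + ham Γ A b f α y (Γ.d1 v α y) + lam * v α y)
    (hkir : ∀ i : Γ.I,
      ∑ α ∈ Γ.adj i, γ i α * μ α * Γ.outDeriv u α i ≤
      ∑ α ∈ Γ.adj i, γ i α * μ α * Γ.outDeriv v α i) :
    ∀ α, ∀ y ∈ Γ.edge α, u α y ≤ v α y := by
  by_contra! hcontra
  obtain ⟨α₁, y₁, hy₁, hlt⟩ := hcontra
  have : Nonempty Γ.ι := ⟨α₁⟩
  obtain ⟨α, t, ht, hmax⟩ := exists_forall_le_of_isCompact_of_finite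
    (f := fun α y => u α y - v α y) (fun α => isCompact_Icc)
    (fun α => nonempty_Icc.2 (Γ.ℓ_pos α).le)
    (fun α => (hu.1 α).continuousOn.sub (hv.1 α).continuousOn)
  have hw : ∀ β, ∀ y ∈ Γ.edge β, HasDerivWithinAt (fun z => u β z - v β z)
      (Γ.d1 u β y - Γ.d1 v β y) (Γ.edge β) y := fun β y hy =>
    (Network.hasDerivWithinAt_d1 ((hu.1 β).of_le one_le_two) hy).sub
      (Network.hasDerivWithinAt_d1 ((hv.1 β).of_le one_le_two) hy)
  have hw' : ∀ y ∈ Γ.edge α, HasDerivWithinAt (fun z => Γ.d1 u α z - Γ.d1 v α z)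
      (Γ.d2 u α y - Γ.d2 v α y) (Γ.edge α) y := fun y hy =>
    (Network.hasDerivWithinAt_d2 (hu.1 α) hy).sub (Network.hasDerivWithinAt_d2 (hv.1 α) hy)
  have hdiff : ∀ y ∈ Ioo 0 (Γ.ℓ α), lam * (u α y - v α y) ≤
      μ α * (Γ.d2 u α y - Γ.d2 v α y) + K * |Γ.d1 u α y - Γ.d1 v α y| := fun y hy => by
    have hham := ham_le_add_mul_abs_sub ((hH2 α).2.2.1 y (Ioo_subset_Icc_self hy))
      (Γ.d1 v α y) (Γ.d1 u α y)
    rw [abs_sub_comm] at hham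
    linarith [hineq α y hy]
  exact not_isMaxOn_Icc_of_diffIneq (Γ.ℓ_pos α) (hH1.1 α) hlam.1 (hw α) hw' hdiff ht
    ((sub_pos.2 hlt).trans_le (hmax α₁ y₁ hy₁))
    (Network.d1_sub_eq_zero_of_isMaxOn hH1 hu.2 hv.2 hkir hw ht hmax)
    (isMaxOn_iff.2 (hmax α))

/-- Lemma 3.3, comparison principle for the discounted HJ equation.
Assume (H1)–(H2) and let `λ ∈ (0,1)`. If `u, v ∈ C²(Γ)` satisfy
`-μ_α ∂²v + H_α(x,∂v) + λv ≥ -μ_α ∂²u + H_α(x,∂u) + λu` pointwise on `Γ_α∖𝒱` for every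
`α ∈ 𝒜`, and `Σ_{α∈𝒜_i} γ_{iα} μ_α ∂_α v(ν_i) ≥ Σ_{α∈𝒜_i} γ_{iα} μ_α ∂_α u(ν_i)` at every
vertex `ν_i`, then `v ≥ u` on `Γ`. -/
theorem comparison_principle_network
    (Γ : Network) (hconn : Γ.Conn)
    (μ : Γ.ι → ℝ) (γ : Γ.I → Γ.ι → ℝ)
    (A : Type) [MetricSpace A] [CompactSpace A] [Nonempty A]
    (b f : Γ.ι → ℝ → A → ℝ) (K L : ℝ)
    (hH1 : Γ.H1cond μ γ) (hH2 : H2cond Γ A b f K L)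
    (lam : ℝ) (hlam : lam ∈ Ioo (0:ℝ) 1)
    (u v : Γ.ι → ℝ → ℝ) (hu : Γ.Cm 2 u) (hv : Γ.Cm 2 v)
    (hineq : ∀ α, ∀ y ∈ Ioo 0 (Γ.ℓ α),
      -(μ α) * Γ.d2 u α y + ham Γ A b f α y (Γ.d1 u α y) + lam * u α y ≤
      -(μ α) * Γ.d2 v α y + ham Γ A b f α y (Γ.d1 v α y) + lam * v α y)
    (hkir : ∀ i : Γ.I,
      ∑ α ∈ Γ.adj i, γ i α * μ α * Γ.outDeriv u α i ≤
      ∑ α ∈ Γ.adj i, γ i α * μ α * Γ.outDeriv v α i) :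
    ∀ α, ∀ y ∈ Γ.edge α, u α y ≤ v α y :=
  comparison_principle_network_general Γ μ γ A b f K L hH1 hH2 lam hlam u v hu hv hineq hkir
end
end

section
/- Explicit formula for the effective Hamiltonian of a periodic lattice (Lemma 5.1, formula part): fix (x,P,X) ∈ ℝ^N × ℝ^N × S^N. If (v,ρ) = ((v_1,…,v_N), ρ) solves the cell problem on the unit lattice cell, then ρ = −( Σ_{k=1}^N γ_k [ −μ_k X e_k·e_k + ∫_0^1 H_k(x, y, P·e_k) dy ] ) / ( Σ_{k=1}^N γ_k ). In particular the constant ρ for which the cell problem is solvable is unique. -/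
open scoped Classical
open Set MeasureTheory

noncomputable section

/-- points of `ℝ^N` (with the sup norm, equivalent to the Euclidean one) -/
abbrev Vec (N : ℕ) := Fin N → ℝ

/-- `N × N` real matrices -/
abbrev Mat (N : ℕ) := Matrix (Fin N) (Fin N) ℝ

/-- a norm `|X|` on the `N × N` matrices -/
def matNorm {N : ℕ} (X : Mat N) : ℝ := ∑ i, ∑ j, |X i j|

/-- first derivative on the unit interval `[0,1]` (one-sided at the endpoints) -/
def d1I (v : ℝ → ℝ) : ℝ → ℝ := derivWithin v (Icc 0 1)

/-- second derivative on the unit interval `[0,1]` -/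
def d2I (v : ℝ → ℝ) : ℝ → ℝ := derivWithin (d1I v) (Icc 0 1)

/-- the Bellman Hamiltonian on the `k`-th edge direction:
`H_k(x, y, p) = sup_{a ∈ A} { -b_k(x,y,a) p - f_k(x,y,a) }` -/
def latHam {N : ℕ} (A : Type) (b f : Fin N → Vec N → ℝ → A → ℝ) (k : Fin N)
    (x : Vec N) (y p : ℝ) : ℝ :=
  ⨆ a : A, (-(b k x y a) * p - f k x y a)

/-- the standing assumptions on the data `b_k, f_k : ℝ^N × [0,1] × A → ℝ`: continuity,
boundedness by `K` and Lipschitz continuity in `(x,y)` with constant `L`, uniformly in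
`a ∈ A`. -/
def latDataCond {N : ℕ} (A : Type) [TopologicalSpace A]
    (b f : Fin N → Vec N → ℝ → A → ℝ) (K L : ℝ) : Prop :=
  ∀ k : Fin N,
    Continuous (fun q : Vec N × ℝ × A => b k q.1 q.2.1 q.2.2) ∧
    Continuous (fun q : Vec N × ℝ × A => f k q.1 q.2.1 q.2.2) ∧
    (∀ x y a, |b k x y a| ≤ K ∧ |f k x y a| ≤ K) ∧
    (∀ x₁ x₂ : Vec N, ∀ y₁ y₂ : ℝ, ∀ a : A,
      |b k x₁ y₁ a - b k x₂ y₂ a| ≤ L * (‖x₁ - x₂‖ + |y₁ - y₂|) ∧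
      |f k x₁ y₁ a - f k x₂ y₂ a| ≤ L * (‖x₁ - x₂‖ + |y₁ - y₂|))

/-- the cell problem on the unit lattice cell at the frozen slow data `(x, P, X)`:
`v_k ∈ C²([0,1])` represent a `ℤ^N`-periodic function on the unit lattice restricted to the
edges issuing from the origin in the directions `e_k`, and `ρ ∈ ℝ` is such that
continuity and periodicity at the vertices hold, on each edge
`-μ_k (v_k'' + X e_k·e_k) + H_k(x, y, P·e_k) + ρ = 0`, and the Kirchhoff condition
(accounting for the `2N` incident edges via periodicity)
`Σ_k γ_k μ_k (v_k'(1) - v_k'(0)) = 0` holds. -/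
def IsCellSol {N : ℕ} (μ γ : Fin N → ℝ) (H : Fin N → Vec N → ℝ → ℝ → ℝ)
    (x P : Vec N) (X : Mat N) (v : Fin N → ℝ → ℝ) (ρ : ℝ) : Prop :=
  (∀ k, ContDiffOn ℝ 2 (v k) (Icc 0 1)) ∧
  (∀ k j : Fin N, v k 0 = v j 0) ∧
  (∀ k, v k 1 = v k 0) ∧
  (∀ k, ∀ y ∈ Ioo (0:ℝ) 1, -(μ k) * (d2I (v k) y + X k k) + H k x y (P k) + ρ = 0) ∧
  (∑ k, γ k * μ k * (d1I (v k) 1 - d1I (v k) 0)) = 0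

/-! Integrating the edge equation over `[0,1]` turns each `μ_k (v_k'(1) - v_k'(0))` into
`∫₀¹ H_k - μ_k X_kk + ρ`. The Kirchhoff condition makes the `γ_k`-weighted sum of these vanish,
which is a linear equation for `ρ` with coefficient `Σ_k γ_k > 0`. -/

section UnitInterval

variable {v : ℝ → ℝ}

theorem contDiffOn_d1I (hv : ContDiffOn ℝ 2 v (Icc 0 1)) : ContDiffOn ℝ 1 (d1I v) (Icc 0 1) :=
  hv.derivWithin (uniqueDiffOn_Icc one_pos) (by norm_num)

theorem continuousOn_d2I (hv : ContDiffOn ℝ 2 v (Icc 0 1)) : ContinuousOn (d2I v) (Icc 0 1) :=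
  ((contDiffOn_d1I hv).derivWithin (uniqueDiffOn_Icc one_pos) le_rfl :
    ContDiffOn ℝ 0 (d2I v) (Icc 0 1)).continuousOn

theorem integral_d2I_eq_sub (hv : ContDiffOn ℝ 2 v (Icc 0 1)) :
    ∫ y in (0:ℝ)..1, d2I v y = d1I v 1 - d1I v 0 := by
  have hv' := contDiffOn_d1I hv
  refine intervalIntegral.integral_eq_sub_of_hasDerivAt_of_le zero_le_one hv'.continuousOn
    (fun y hy => ?_) ((continuousOn_d2I hv).intervalIntegrable_of_Icc zero_le_one)
  exact ((hv'.differentiableOn one_ne_zero) y (Ioo_subset_Icc_self hy)).hasDerivWithinAt.hasDerivAt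
    (Icc_mem_nhds hy.1 hy.2)

theorem mul_sub_d1I_eq_integral_sub_add {h : ℝ → ℝ} {μ c ρ : ℝ}
    (hv : ContDiffOn ℝ 2 v (Icc 0 1))
    (heq : ∀ y ∈ Ioo (0:ℝ) 1, -μ * (d2I v y + c) + h y + ρ = 0) :
    μ * (d1I v 1 - d1I v 0) = (∫ y in (0:ℝ)..1, h y) - μ * c + ρ := by
  have hint : IntervalIntegrable (d2I v) volume 0 1 :=
    (continuousOn_d2I hv).intervalIntegrable_of_Icc zero_le_one
  have hh : ∫ y in (0:ℝ)..1, h y = ∫ y in (0:ℝ)..1, μ * (d2I v y + c) - ρ := by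
    simp only [intervalIntegral.integral_of_le zero_le_one, integral_Ioc_eq_integral_Ioo]
    exact setIntegral_congr_fun measurableSet_Ioo fun y hy => by linarith [heq y hy]
  rw [hh, intervalIntegral.integral_sub ((hint.add intervalIntegrable_const).const_mul μ)
    intervalIntegrable_const, intervalIntegral.integral_const_mul,
    intervalIntegral.integral_add hint intervalIntegrable_const, integral_d2I_eq_sub hv]
  simp only [intervalIntegral.integral_const, sub_zero, one_smul]
  ring

end UnitInterval

theorem IsCellSol.eq_div {N : ℕ} {μ γ : Fin N → ℝ} {H : Fin N → Vec N → ℝ → ℝ → ℝ}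
    {x P : Vec N} {X : Mat N} {v : Fin N → ℝ → ℝ} {ρ : ℝ}
    (hsol : IsCellSol μ γ H x P X v ρ) (hγ : ∑ k, γ k ≠ 0) :
    ρ = -(∑ k, γ k * (-(μ k) * X k k + ∫ y in (0:ℝ)..1, H k x y (P k))) / (∑ k, γ k) := by
  obtain ⟨hreg, -, -, hedge, hkirchhoff⟩ := hsol
  have hflux k := mul_sub_d1I_eq_integral_sub_add (hreg k) (hedge k)
  have hbalance : ∑ k, γ k * (-(μ k) * X k k + ∫ y in (0:ℝ)..1, H k x y (P k))
      + (∑ k, γ k) * ρ = 0 := by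
    rw [Finset.sum_mul, ← Finset.sum_add_distrib]
    refine (Finset.sum_congr rfl fun k _ => ?_).trans hkirchhoff
    rw [mul_assoc, hflux k]
    ring
  rw [eq_div_iff hγ]
  linarith

theorem effective_hamiltonian_formula_general
    {N : ℕ} (hN : 1 ≤ N)
    (μ γ : Fin N → ℝ) (hγ : ∀ k, 0 < γ k)
    (A : Type)
    (b f : Fin N → Vec N → ℝ → A → ℝ)
    (x P : Vec N) (X : Mat N)
    (v : Fin N → ℝ → ℝ) (ρ : ℝ)
    (hsol : IsCellSol μ γ (latHam A b f) x P X v ρ) :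
    ρ = -(∑ k, γ k * (-(μ k) * X k k + ∫ y in (0:ℝ)..1, latHam A b f k x y (P k))) /
        (∑ k, γ k) ∧
    (∀ (v' : Fin N → ℝ → ℝ) (ρ' : ℝ),
      IsCellSol μ γ (latHam A b f) x P X v' ρ' → ρ' = ρ) := by
  have : Nonempty (Fin N) := ⟨⟨0, hN⟩⟩
  have hγsum : ∑ k, γ k ≠ 0 := (Finset.sum_pos (fun k _ => hγ k) Finset.univ_nonempty).ne'
  exact ⟨hsol.eq_div hγsum, fun v' ρ' hsol' => (hsol'.eq_div hγsum).trans (hsol.eq_div hγsum).symm⟩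

/-- Lemma 5.1, formula for the effective Hamiltonian.
Fix `(x,P,X) ∈ ℝ^N × ℝ^N × S^N`. If `(v, ρ)` solves the cell problem on the unit lattice
cell, then `ρ = -( Σ_k γ_k [ -μ_k X e_k·e_k + ∫₀¹ H_k(x,y,P·e_k) dy ] ) / ( Σ_k γ_k )`.
In particular the constant `ρ` for which the cell problem is solvable is unique. -/
theorem effective_hamiltonian_formula
    {N : ℕ} (hN : 1 ≤ N)
    (μ γ : Fin N → ℝ) (hμ : ∀ k, 0 < μ k) (hγ : ∀ k, 0 < γ k)
    (hnorm : 2 * ∑ k, γ k * μ k = 1)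
    (A : Type) [MetricSpace A] [CompactSpace A] [Nonempty A]
    (b f : Fin N → Vec N → ℝ → A → ℝ) (K L : ℝ) (hbf : latDataCond A b f K L)
    (x P : Vec N) (X : Mat N) (hX : X.IsSymm)
    (v : Fin N → ℝ → ℝ) (ρ : ℝ)
    (hsol : IsCellSol μ γ (latHam A b f) x P X v ρ) :
    ρ = -(∑ k, γ k * (-(μ k) * X k k + ∫ y in (0:ℝ)..1, latHam A b f k x y (P k))) /
        (∑ k, γ k) ∧
    (∀ (v' : Fin N → ℝ → ℝ) (ρ' : ℝ),
      IsCellSol μ γ (latHam A b f) x P X v' ρ' → ρ' = ρ) :=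
  effective_hamiltonian_formula_general hN μ γ hγ A b f x P X v ρ hsol
end
end

section
/- Corrector estimates for the cell problem (Lemma 5.1, estimates part): for every (x,P,X) ∈ ℝ^N × ℝ^N × S^N there exists a unique solution (v,ρ) of the cell problem normalized by ⟨v⟩ := Σ_{k=1}^N ∫_0^1 v_k(y) dy = 0; denote it v(·;x,P,X). There exist constants C̄₁, C̄₂ and θ ∈ (0,1], independent of (x,P,X), such that ‖v(·;x,P,X)‖_{C^{2,θ}} ≤ C̄₁ (1 + |P| + |X|), and for all (x₁,P₁,X₁), (x₂,P₂,X₂): ‖v(·;x₁,P₁,X₁) − v(·;x₂,P₂,X₂)‖_{L∞} ≤ C̄₂ ( |P₁−P₂| + |X₁−X₂| ) + C̄₁ |x₁−x₂| ( 1 + min(|P₁|,|P₂|) + min(|X₁|,|X₂|) ). -/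
open scoped Classical
open Set MeasureTheory

noncomputable section

/-- the mean `⟨v⟩ = Σ_k ∫₀¹ v_k` of a function on the unit lattice cell -/
def cellAvg {N : ℕ} (v : Fin N → ℝ → ℝ) : ℝ := ∑ k, ∫ y in (0:ℝ)..1, v k y

/-- sup norm on the unit interval -/
def cellSup (g : ℝ → ℝ) : ℝ := sSup ((fun y => |g y|) '' Icc (0:ℝ) 1)

/-- the `θ`-Hölder seminorm `[g]_θ` on `[0,1]` -/
def cellHolder (θ : ℝ) (g : ℝ → ℝ) : ℝ :=
  sSup {c | ∃ y ∈ Icc (0:ℝ) 1, ∃ z ∈ Icc (0:ℝ) 1, y ≠ z ∧ c = |g y - g z| / |y - z| ^ θ}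

/-- the `C^{2,θ}` norm `Σ_k Σ_{j≤2} ‖v_k^{(j)}‖_∞ + max_k [v_k'']_θ` of a function on the
unit lattice cell -/
def cellC2θnorm {N : ℕ} (θ : ℝ) (v : Fin N → ℝ → ℝ) : ℝ :=
  (∑ k, (cellSup (v k) + cellSup (d1I (v k)) + cellSup (d2I (v k)))) +
  ⨆ k, cellHolder θ (d2I (v k))

/-!
Every edge of the unit cell is a loop at its single vertex, so the cell problem consists of the
ODEs `v_k'' = q_k := (H_k + ρ)/μ_k - X e_k·e_k` on `[0,1]`, coupled only through `ρ` and the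
common vertex value. Integrating them, the Kirchhoff condition reads
`Σ_k γ_k (∫₀¹ H_k + ρ - μ_k X e_k·e_k) = 0`, which fixes `ρ` as a `γ`-weighted average. Then
`v_k = c + w_k`, where `w_k'' = q_k` and `w_k(0) = w_k(1) = 0`, and the normalisation fixes the
vertex value `c`. The solution is thus explicit and linear in `q`, with `|v_k| ≤ 4 sup |q|` and
`v_k'' = q_k` Lipschitz (so `θ = 1`); all the estimates reduce to bounds on `q` and on differences
of `q`, which follow from `|H_k| ≤ K (1 + |p|)` and the Lipschitz bounds on `b_k`, `f_k`.
-/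

open intervalIntegral

namespace CellProblem

section Profiles

def dblPrim (q : ℝ → ℝ) (y : ℝ) : ℝ := ∫ t in (0:ℝ)..y, ∫ s in (0:ℝ)..t, q s

def edgeProfile (q : ℝ → ℝ) (y : ℝ) : ℝ := dblPrim q y - y * dblPrim q 1

def cellShift {N : ℕ} (Q : Fin N → ℝ → ℝ) : ℝ :=
  -(∑ k, ∫ y in (0:ℝ)..1, edgeProfile (Q k) y) / N

def cellCorrector {N : ℕ} (Q : Fin N → ℝ → ℝ) (k : Fin N) (y : ℝ) : ℝ :=
  cellShift Q + edgeProfile (Q k) y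

variable {q q₁ q₂ : ℝ → ℝ}

theorem continuous_primitive_zero (hq : Continuous q) :
    Continuous fun y => ∫ s in (0:ℝ)..y, q s :=
  continuous_primitive (fun _ _ => hq.intervalIntegrable _ _) 0

theorem hasDerivAt_dblPrim (hq : Continuous q) (y : ℝ) :
    HasDerivAt (dblPrim q) (∫ s in (0:ℝ)..y, q s) y :=
  ((continuous_primitive_zero hq).integral_hasStrictDerivAt 0 y).hasDerivAt

theorem hasDerivAt_edgeProfile (hq : Continuous q) (y : ℝ) :
    HasDerivAt (edgeProfile q) ((∫ s in (0:ℝ)..y, q s) - dblPrim q 1) y :=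
  (hasDerivAt_dblPrim hq y).sub (hasDerivAt_mul_const (dblPrim q 1))

theorem hasDerivAt_deriv_edgeProfile (hq : Continuous q) (y : ℝ) :
    HasDerivAt (fun y => (∫ s in (0:ℝ)..y, q s) - dblPrim q 1) (q y) y :=
  (hq.integral_hasStrictDerivAt 0 y).hasDerivAt.sub_const _

theorem contDiff_edgeProfile (hq : Continuous q) : ContDiff ℝ 2 (edgeProfile q) := by
  have hprim : ContDiff ℝ 1 fun y => ∫ s in (0:ℝ)..y, q s := by
    rw [contDiff_one_iff_deriv, funext (hq.deriv_integral q 0)]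
    exact ⟨fun y => (hq.integral_hasStrictDerivAt 0 y).hasDerivAt.differentiableAt, hq⟩
  have hdbl : ContDiff ℝ (1 + 1) (dblPrim q) := by
    rw [contDiff_succ_iff_deriv, funext fun y => (hasDerivAt_dblPrim hq y).deriv]
    exact ⟨fun y => (hasDerivAt_dblPrim hq y).differentiableAt, by simp, hprim⟩
  exact hdbl.sub (contDiff_id.mul contDiff_const)

theorem edgeProfile_zero (q : ℝ → ℝ) : edgeProfile q 0 = 0 := by
  simp [edgeProfile, dblPrim]

theorem edgeProfile_one (q : ℝ → ℝ) : edgeProfile q 1 = 0 := by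
  simp [edgeProfile]

theorem dblPrim_sub (hq₁ : Continuous q₁) (hq₂ : Continuous q₂) :
    dblPrim (q₁ - q₂) = dblPrim q₁ - dblPrim q₂ := by
  funext y
  simp only [dblPrim, Pi.sub_apply]
  rw [← integral_sub ((continuous_primitive_zero hq₁).intervalIntegrable _ _)
    ((continuous_primitive_zero hq₂).intervalIntegrable _ _)]
  exact integral_congr fun t _ =>
    integral_sub (hq₁.intervalIntegrable _ _) (hq₂.intervalIntegrable _ _)

theorem edgeProfile_sub (hq₁ : Continuous q₁) (hq₂ : Continuous q₂) :
    edgeProfile (q₁ - q₂) = edgeProfile q₁ - edgeProfile q₂ := by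
  funext y
  simp only [edgeProfile, dblPrim_sub hq₁ hq₂, Pi.sub_apply]
  ring

theorem abs_integral_le_of_abs_le {M : ℝ} (hM : ∀ t ∈ Icc (0:ℝ) 1, |q t| ≤ M) {y : ℝ}
    (hy : y ∈ Icc (0:ℝ) 1) : |∫ t in (0:ℝ)..y, q t| ≤ M := by
  have hM0 : 0 ≤ M := (abs_nonneg _).trans (hM 0 (left_mem_Icc.2 zero_le_one))
  have hbound : ∀ t ∈ uIoc (0:ℝ) y, ‖q t‖ ≤ M := fun t ht => by
    rw [uIoc_of_le hy.1] at ht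
    exact hM t ⟨ht.1.le, ht.2.trans hy.2⟩
  calc |∫ t in (0:ℝ)..y, q t| ≤ M * |y - 0| := norm_integral_le_of_norm_le_const hbound
    _ ≤ M * 1 := by gcongr; rw [sub_zero, abs_of_nonneg hy.1]; exact hy.2
    _ = M := mul_one M

theorem abs_dblPrim_le {M : ℝ} (hM : ∀ t ∈ Icc (0:ℝ) 1, |q t| ≤ M) {y : ℝ}
    (hy : y ∈ Icc (0:ℝ) 1) : |dblPrim q y| ≤ M :=
  abs_integral_le_of_abs_le (fun _ ht => abs_integral_le_of_abs_le hM ht) hy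

theorem abs_edgeProfile_le {M : ℝ} (hM : ∀ t ∈ Icc (0:ℝ) 1, |q t| ≤ M) {y : ℝ}
    (hy : y ∈ Icc (0:ℝ) 1) : |edgeProfile q y| ≤ 2 * M := by
  have h1 := abs_dblPrim_le hM (right_mem_Icc.2 zero_le_one)
  have hy' : |y| ≤ 1 := abs_le.2 ⟨by linarith [hy.1], hy.2⟩
  calc |edgeProfile q y| ≤ |dblPrim q y| + |y| * |dblPrim q 1| := by
        rw [edgeProfile, ← abs_mul]; exact abs_sub _ _
    _ ≤ M + 1 * M := by gcongr; exact abs_dblPrim_le hM hy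
    _ = 2 * M := by ring

theorem abs_deriv_edgeProfile_le {M : ℝ} (hM : ∀ t ∈ Icc (0:ℝ) 1, |q t| ≤ M) {y : ℝ}
    (hy : y ∈ Icc (0:ℝ) 1) : |(∫ s in (0:ℝ)..y, q s) - dblPrim q 1| ≤ 2 * M := by
  have h1 := abs_integral_le_of_abs_le hM hy
  have h2 := abs_dblPrim_le hM (right_mem_Icc.2 zero_le_one)
  linarith [abs_sub (∫ s in (0:ℝ)..y, q s) (dblPrim q 1)]

end Profiles

section UnitInterval

variable {v v' v'' q : ℝ → ℝ}

theorem d1I_eq_of_hasDerivAt (h : ∀ y, HasDerivAt v (v' y) y) {y : ℝ} (hy : y ∈ Icc (0:ℝ) 1) :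
    d1I v y = v' y :=
  (h y).hasDerivWithinAt.derivWithin (uniqueDiffOn_Icc one_pos y hy)

theorem d2I_eq_of_hasDerivAt (h : ∀ y, HasDerivAt v (v' y) y)
    (h' : ∀ y, HasDerivAt v' (v'' y) y) {y : ℝ} (hy : y ∈ Icc (0:ℝ) 1) :
    d2I v y = v'' y := by
  rw [d2I, derivWithin_congr (fun _ ht => d1I_eq_of_hasDerivAt h ht) (d1I_eq_of_hasDerivAt h hy)]
  exact d1I_eq_of_hasDerivAt h' hy

theorem integral_d1I (hv : ContDiffOn ℝ 1 v (Icc 0 1)) {y : ℝ} (hy : y ∈ Icc (0:ℝ) 1) :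
    ∫ t in (0:ℝ)..y, d1I v t = v y - v 0 := by
  apply integral_eq_sub_of_hasDeriv_right_of_le hy.1
    (hv.continuousOn.mono (Icc_subset_Icc le_rfl hy.2))
  · intro t ht
    have hmem : Icc (0:ℝ) 1 ∈ nhds t := Icc_mem_nhds ht.1 (ht.2.trans_le hy.2)
    exact ((hv.differentiableOn one_ne_zero t (mem_of_mem_nhds hmem)).hasDerivWithinAt
      |>.hasDerivAt hmem).hasDerivWithinAt
  · refine ((hv.continuousOn_derivWithin (uniqueDiffOn_Icc one_pos) le_rfl).mono
      ?_).intervalIntegrable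
    rw [uIcc_of_le hy.1]
    exact Icc_subset_Icc le_rfl hy.2

theorem contDiffOn_d1I (hv : ContDiffOn ℝ 2 v (Icc 0 1)) : ContDiffOn ℝ 1 (d1I v) (Icc 0 1) :=
  hv.derivWithin (uniqueDiffOn_Icc one_pos) (by norm_num)

theorem continuousOn_d2I (hv : ContDiffOn ℝ 2 v (Icc 0 1)) : ContinuousOn (d2I v) (Icc 0 1) :=
  (contDiffOn_d1I hv).continuousOn_derivWithin (uniqueDiffOn_Icc one_pos) le_rfl

theorem integral_d2I (hv : ContDiffOn ℝ 2 v (Icc 0 1)) (h2 : EqOn (d2I v) q (Icc 0 1)) {y : ℝ}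
    (hy : y ∈ Icc (0:ℝ) 1) : ∫ t in (0:ℝ)..y, q t = d1I v y - d1I v 0 := by
  rw [← integral_d1I (contDiffOn_d1I hv) hy]
  refine integral_congr (h2.symm.mono ?_)
  rw [uIcc_of_le hy.1]
  exact Icc_subset_Icc le_rfl hy.2

theorem eqOn_add_edgeProfile (hv : ContDiffOn ℝ 2 v (Icc 0 1)) (hq : Continuous q)
    (h2 : EqOn (d2I v) q (Icc 0 1)) (hper : v 1 = v 0) :
    EqOn v (fun y => v 0 + edgeProfile q y) (Icc 0 1) := by
  have hv : ∀ y ∈ Icc (0:ℝ) 1, v y = v 0 + d1I v 0 * y + dblPrim q y := fun y hy => by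
    have hint := integral_d1I (hv.of_le (by norm_num)) hy
    rw [integral_congr (g := fun t => d1I v 0 + ∫ s in (0:ℝ)..t, q s), integral_add
      intervalIntegrable_const ((continuous_primitive_zero hq).intervalIntegrable _ _),
      intervalIntegral.integral_const, smul_eq_mul, sub_zero] at hint
    · rw [dblPrim]; linarith
    · intro t ht
      rw [uIcc_of_le hy.1] at ht
      linarith [integral_d2I hv h2 ⟨ht.1, ht.2.trans hy.2⟩]
  have hslope : d1I v 0 = -dblPrim q 1 := by
    have := hv 1 (right_mem_Icc.2 zero_le_one); rw [hper] at this; linarith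
  intro y hy
  simp only [hv y hy, hslope, edgeProfile]
  ring

end UnitInterval

section Corrector

variable {N : ℕ} {Q Q₁ Q₂ : Fin N → ℝ → ℝ}

theorem contDiff_cellCorrector (hQ : ∀ k, Continuous (Q k)) (k : Fin N) :
    ContDiff ℝ 2 (cellCorrector Q k) :=
  contDiff_const.add (contDiff_edgeProfile (hQ k))

theorem cellCorrector_zero (Q : Fin N → ℝ → ℝ) (k : Fin N) : cellCorrector Q k 0 = cellShift Q := by
  simp [cellCorrector, edgeProfile_zero]

theorem cellCorrector_one (Q : Fin N → ℝ → ℝ) (k : Fin N) : cellCorrector Q k 1 = cellShift Q := by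
  simp [cellCorrector, edgeProfile_one]

theorem d1I_cellCorrector (hQ : ∀ k, Continuous (Q k)) (k : Fin N) {y : ℝ}
    (hy : y ∈ Icc (0:ℝ) 1) :
    d1I (cellCorrector Q k) y = (∫ s in (0:ℝ)..y, Q k s) - dblPrim (Q k) 1 :=
  d1I_eq_of_hasDerivAt (fun y => (hasDerivAt_edgeProfile (hQ k) y).const_add _) hy

theorem d2I_cellCorrector (hQ : ∀ k, Continuous (Q k)) (k : Fin N) {y : ℝ}
    (hy : y ∈ Icc (0:ℝ) 1) : d2I (cellCorrector Q k) y = Q k y :=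
  d2I_eq_of_hasDerivAt (fun y => (hasDerivAt_edgeProfile (hQ k) y).const_add _)
    (hasDerivAt_deriv_edgeProfile (hQ k)) hy

theorem cellAvg_eq_zero_iff (hN : N ≠ 0) (hQ : ∀ k, Continuous (Q k))
    {v : Fin N → ℝ → ℝ} {c : ℝ}
    (hv : ∀ k, EqOn (v k) (fun y => c + edgeProfile (Q k) y) (Icc 0 1)) :
    cellAvg v = 0 ↔ c = cellShift Q := by
  have hint : ∀ k, ∫ y in (0:ℝ)..1, v k y = c + ∫ y in (0:ℝ)..1, edgeProfile (Q k) y := fun k => by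
    rw [integral_congr (by rw [uIcc_of_le zero_le_one]; exact hv k), integral_add
      intervalIntegrable_const ((contDiff_edgeProfile (hQ k)).continuous.intervalIntegrable _ _)]
    simp
  rw [cellAvg, Finset.sum_congr rfl fun k _ => hint k, Finset.sum_add_distrib, Finset.sum_const,
    Finset.card_univ, Fintype.card_fin, nsmul_eq_mul, cellShift, eq_div_iff (Nat.cast_ne_zero.2 hN)]
  constructor <;> intro h <;> linarith

theorem cellCorrector_sub (hQ₁ : ∀ k, Continuous (Q₁ k)) (hQ₂ : ∀ k, Continuous (Q₂ k)) :
    cellCorrector (Q₁ - Q₂) = cellCorrector Q₁ - cellCorrector Q₂ := by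
  have hprof : ∀ k, edgeProfile (Q₁ k - Q₂ k) = edgeProfile (Q₁ k) - edgeProfile (Q₂ k) :=
    fun k => edgeProfile_sub (hQ₁ k) (hQ₂ k)
  have hshift : cellShift (Q₁ - Q₂) = cellShift Q₁ - cellShift Q₂ := by
    simp only [cellShift, Pi.sub_apply, hprof]
    rw [← sub_div, ← neg_sub', ← Finset.sum_sub_distrib]
    congr 3
    funext k
    exact integral_sub ((contDiff_edgeProfile (hQ₁ k)).continuous.intervalIntegrable _ _)
      ((contDiff_edgeProfile (hQ₂ k)).continuous.intervalIntegrable _ _)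
  funext k y
  simp only [cellCorrector, hshift, Pi.sub_apply, hprof]
  ring

theorem abs_cellShift_le {M : ℝ} (hM0 : 0 ≤ M) (hM : ∀ k, ∀ t ∈ Icc (0:ℝ) 1, |Q k t| ≤ M) :
    |cellShift Q| ≤ 2 * M := by
  rw [cellShift, abs_div, abs_neg, Nat.abs_cast]
  refine div_le_of_le_mul₀ (Nat.cast_nonneg N) (by positivity) ?_
  calc |∑ k, ∫ y in (0:ℝ)..1, edgeProfile (Q k) y|
      ≤ ∑ _k : Fin N, 2 * M := (Finset.abs_sum_le_sum_abs _ _).trans (Finset.sum_le_sum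
        fun k _ => abs_integral_le_of_abs_le (fun _ ht => abs_edgeProfile_le (hM k) ht)
          (right_mem_Icc.2 zero_le_one))
    _ = 2 * M * N := by simp [mul_comm]

theorem abs_cellCorrector_le {M : ℝ} (hM : ∀ k, ∀ t ∈ Icc (0:ℝ) 1, |Q k t| ≤ M) (k : Fin N)
    {y : ℝ} (hy : y ∈ Icc (0:ℝ) 1) : |cellCorrector Q k y| ≤ 4 * M := by
  have hM0 : 0 ≤ M := (abs_nonneg _).trans (hM k 0 (left_mem_Icc.2 zero_le_one))
  rw [cellCorrector]
  linarith [abs_add_le (cellShift Q) (edgeProfile (Q k) y), abs_cellShift_le hM0 hM,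
    abs_edgeProfile_le (hM k) hy]

theorem cellSup_le {g : ℝ → ℝ} {C : ℝ} (h : ∀ y ∈ Icc (0:ℝ) 1, |g y| ≤ C) : cellSup g ≤ C :=
  csSup_le ((nonempty_Icc.2 zero_le_one).image _) (forall_mem_image.2 h)

theorem cellHolder_one_le {g : ℝ → ℝ} {C : ℝ}
    (h : ∀ y ∈ Icc (0:ℝ) 1, ∀ z ∈ Icc (0:ℝ) 1, |g y - g z| ≤ C * |y - z|) :
    cellHolder 1 g ≤ C := by
  refine csSup_le ⟨_, 0, left_mem_Icc.2 zero_le_one, 1, right_mem_Icc.2 zero_le_one,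
    zero_ne_one, rfl⟩ ?_
  rintro c ⟨y, hy, z, hz, hyz, rfl⟩
  rw [Real.rpow_one, div_le_iff₀ (abs_pos.2 (sub_ne_zero.2 hyz))]
  exact h y hy z hz

theorem cellC2θnorm_one_cellCorrector_le (hQ : ∀ k, Continuous (Q k)) {M Λ : ℝ} (hΛ : 0 ≤ Λ)
    (hM : ∀ k, ∀ t ∈ Icc (0:ℝ) 1, |Q k t| ≤ M)
    (hLip : ∀ k, ∀ y ∈ Icc (0:ℝ) 1, ∀ z ∈ Icc (0:ℝ) 1, |Q k y - Q k z| ≤ Λ * |y - z|) :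
    cellC2θnorm 1 (cellCorrector Q) ≤ 7 * N * M + Λ := by
  have hedge : ∀ k, cellSup (cellCorrector Q k) + cellSup (d1I (cellCorrector Q k))
      + cellSup (d2I (cellCorrector Q k)) ≤ 7 * M := fun k => by
    have h0 := cellSup_le fun y hy => abs_cellCorrector_le hM k hy
    have h1 := cellSup_le fun y hy => (d1I_cellCorrector hQ k hy).symm ▸
      abs_deriv_edgeProfile_le (hM k) hy
    have h2 := cellSup_le fun y hy => (d2I_cellCorrector hQ k hy).symm ▸ hM k y hy
    linarith
  have hholder : (⨆ k, cellHolder 1 (d2I (cellCorrector Q k))) ≤ Λ :=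
    Real.iSup_le (fun k => cellHolder_one_le fun y hy z hz => by
      rw [d2I_cellCorrector hQ k hy, d2I_cellCorrector hQ k hz]; exact hLip k y hy z hz) hΛ
  calc cellC2θnorm 1 (cellCorrector Q) ≤ (∑ _k : Fin N, 7 * M) + Λ :=
        add_le_add (Finset.sum_le_sum fun k _ => hedge k) hholder
    _ = 7 * N * M + Λ := by simp; ring

end Corrector

theorem abs_ciSup_sub_ciSup_le {ι : Type*} [Nonempty ι] {F G : ι → ℝ} {C : ℝ}
    (hF : BddAbove (range F)) (hG : BddAbove (range G)) (h : ∀ i, |F i - G i| ≤ C) :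
    |(⨆ i, F i) - ⨆ i, G i| ≤ C := by
  refine abs_sub_le_iff.2 ⟨sub_le_iff_le_add.2 (ciSup_le fun i => ?_),
    sub_le_iff_le_add.2 (ciSup_le fun i => ?_)⟩
  · linarith [(abs_sub_le_iff.1 (h i)).1, le_ciSup hG i]
  · linarith [(abs_sub_le_iff.1 (h i)).2, le_ciSup hF i]

section Hamiltonian

variable {N : ℕ} {A : Type} [TopologicalSpace A] {b f : Fin N → Vec N → ℝ → A → ℝ}
  {K L : ℝ}

theorem latDataCond.nonneg [Nonempty A] (hbf : latDataCond A b f K L) (k : Fin N) :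
    0 ≤ K ∧ 0 ≤ L := by
  obtain ⟨a⟩ := ‹Nonempty A›
  refine ⟨(abs_nonneg _).trans ((hbf k).2.2.1 0 0 a).1, ?_⟩
  have h := ((hbf k).2.2.2 0 0 0 1 a).1
  norm_num at h
  linarith [abs_nonneg (b k 0 0 a - b k 0 1 a)]

theorem abs_latHam_term_le (hbf : latDataCond A b f K L) (k : Fin N) (x : Vec N) (y p : ℝ)
    (a : A) : |-(b k x y a) * p - f k x y a| ≤ K * (1 + |p|) := by
  obtain ⟨hb, hf⟩ := (hbf k).2.2.1 x y a
  calc |-(b k x y a) * p - f k x y a| ≤ |b k x y a| * |p| + |f k x y a| := by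
        rw [← abs_mul, neg_mul, ← neg_add', abs_neg]; exact abs_add_le _ _
    _ ≤ K * |p| + K := by gcongr
    _ = K * (1 + |p|) := by ring

theorem bddAbove_range_latHam_term (hbf : latDataCond A b f K L) (k : Fin N) (x : Vec N)
    (y p : ℝ) : BddAbove (range fun a : A => -(b k x y a) * p - f k x y a) :=
  ⟨_, forall_mem_range.2 fun a => (abs_le.1 (abs_latHam_term_le hbf k x y p a)).2⟩

theorem abs_latHam_le [Nonempty A] (hbf : latDataCond A b f K L) (k : Fin N) (x : Vec N)
    (y p : ℝ) :
    |latHam A b f k x y p| ≤ K * (1 + |p|) := by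
  simpa [latHam] using abs_ciSup_sub_ciSup_le (G := fun _ => 0)
    (bddAbove_range_latHam_term hbf k x y p) (by simp) fun a => by
      simpa using abs_latHam_term_le hbf k x y p a

theorem abs_latHam_sub_le [Nonempty A] (hbf : latDataCond A b f K L) (k : Fin N) (x₁ x₂ : Vec N)
    (y₁ y₂ p₁ p₂ : ℝ) :
    |latHam A b f k x₁ y₁ p₁ - latHam A b f k x₂ y₂ p₂|
      ≤ K * |p₁ - p₂| + L * (‖x₁ - x₂‖ + |y₁ - y₂|) * (1 + |p₂|) := by
  refine abs_ciSup_sub_ciSup_le (bddAbove_range_latHam_term hbf k x₁ y₁ p₁)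
    (bddAbove_range_latHam_term hbf k x₂ y₂ p₂) fun a => ?_
  obtain ⟨hb₁, -⟩ := (hbf k).2.2.1 x₁ y₁ a
  obtain ⟨hb, hf⟩ := (hbf k).2.2.2 x₁ x₂ y₁ y₂ a
  calc |(-(b k x₁ y₁ a) * p₁ - f k x₁ y₁ a) - (-(b k x₂ y₂ a) * p₂ - f k x₂ y₂ a)|
      = |b k x₁ y₁ a * (p₁ - p₂) + (b k x₁ y₁ a - b k x₂ y₂ a) * p₂
          + (f k x₁ y₁ a - f k x₂ y₂ a)| := by rw [← abs_neg]; ring_nf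
    _ ≤ |b k x₁ y₁ a| * |p₁ - p₂| + |b k x₁ y₁ a - b k x₂ y₂ a| * |p₂|
          + |f k x₁ y₁ a - f k x₂ y₂ a| := by
        rw [← abs_mul, ← abs_mul]; exact abs_add_three _ _ _
    _ ≤ K * |p₁ - p₂| + L * (‖x₁ - x₂‖ + |y₁ - y₂|) * |p₂| + L * (‖x₁ - x₂‖ + |y₁ - y₂|) := by
        gcongr
    _ = K * |p₁ - p₂| + L * (‖x₁ - x₂‖ + |y₁ - y₂|) * (1 + |p₂|) := by ring

theorem continuous_latHam [Nonempty A] (hbf : latDataCond A b f K L) (k : Fin N) (x : Vec N)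
    (p : ℝ) :
    Continuous fun y => latHam A b f k x y p := by
  refine (LipschitzWith.of_dist_le_mul fun y₁ y₂ => ?_ : LipschitzWith
    (L * (1 + |p|)).toNNReal _).continuous
  have h := abs_latHam_sub_le hbf k x x y₁ y₂ p p
  simp only [sub_self, abs_zero, norm_zero, mul_zero, zero_add] at h
  rw [Real.dist_eq, Real.dist_eq, Real.coe_toNNReal']
  calc _ ≤ L * |y₁ - y₂| * (1 + |p|) := h
    _ ≤ max (L * (1 + |p|)) 0 * |y₁ - y₂| := by
        rw [mul_right_comm]; gcongr; exact le_max_left _ _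

end Hamiltonian

section CellSolution

def cellRho {N : ℕ} (A : Type) (b f : Fin N → Vec N → ℝ → A → ℝ) (μ γ : Fin N → ℝ)
    (x P : Vec N) (X : Mat N) : ℝ :=
  (∑ k, γ k * (μ k * X k k - ∫ y in (0:ℝ)..1, latHam A b f k x y (P k))) / ∑ k, γ k

def cellSource {N : ℕ} (A : Type) (b f : Fin N → Vec N → ℝ → A → ℝ) (μ : Fin N → ℝ)
    (x P : Vec N) (X : Mat N) (ρ : ℝ) (k : Fin N) (y : ℝ) : ℝ :=
  (latHam A b f k x y (P k) + ρ) / μ k - X k k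

def corrector {N : ℕ} (A : Type) (b f : Fin N → Vec N → ℝ → A → ℝ) (μ γ : Fin N → ℝ)
    (x P : Vec N) (X : Mat N) : Fin N → ℝ → ℝ :=
  cellCorrector (cellSource A b f μ x P X (cellRho A b f μ γ x P X))

theorem cellEquation_iff {N : ℕ} {A : Type} {b f : Fin N → Vec N → ℝ → A → ℝ}
    {μ : Fin N → ℝ} {k : Fin N} (hμ : μ k ≠ 0) {x P : Vec N} {X : Mat N} {ρ y s : ℝ} :
    -(μ k) * (s + X k k) + latHam A b f k x y (P k) + ρ = 0 ↔
      s = cellSource A b f μ x P X ρ k y := by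
  rw [cellSource, eq_sub_iff_add_eq, eq_div_iff hμ]
  constructor <;> intro h <;> linarith

variable {N : ℕ} {A : Type} [TopologicalSpace A] [Nonempty A] {b f : Fin N → Vec N → ℝ → A → ℝ}
  {μ γ : Fin N → ℝ} {K L : ℝ}

theorem continuous_cellSource (hbf : latDataCond A b f K L) (x P : Vec N) (X : Mat N) (ρ : ℝ)
    (k : Fin N) : Continuous (cellSource A b f μ x P X ρ k) :=
  (((continuous_latHam hbf k x (P k)).add continuous_const).div_const _).sub continuous_const

theorem kirchhoff_sum_cellSource (hbf : latDataCond A b f K L) (hμ : ∀ k, μ k ≠ 0)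
    (hγ : ∑ k, γ k ≠ 0) (x P : Vec N) (X : Mat N) (ρ : ℝ) :
    ∑ k, γ k * μ k * ∫ y in (0:ℝ)..1, cellSource A b f μ x P X ρ k y
      = (∑ k, γ k) * (ρ - cellRho A b f μ γ x P X) := by
  have hterm : ∀ k, γ k * μ k * ∫ y in (0:ℝ)..1, cellSource A b f μ x P X ρ k y
      = γ k * ρ - γ k * (μ k * X k k - ∫ y in (0:ℝ)..1, latHam A b f k x y (P k)) := fun k => by
    have hH := (continuous_latHam hbf k x (P k)).intervalIntegrable (μ := volume) 0 1
    simp only [cellSource]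
    rw [integral_sub ((hH.add intervalIntegrable_const).div_const _) intervalIntegrable_const,
      intervalIntegral.integral_div, integral_add hH intervalIntegrable_const]
    simp only [intervalIntegral.integral_const, sub_zero, one_smul]
    field_simp [hμ k]
    ring
  rw [Finset.sum_congr rfl fun k _ => hterm k, Finset.sum_sub_distrib, ← Finset.sum_mul,
    cellRho, mul_sub, mul_div_cancel₀ _ hγ]

theorem isCellSol_corrector (hbf : latDataCond A b f K L) (hμ : ∀ k, μ k ≠ 0)
    (hγ : ∑ k, γ k ≠ 0) (x P : Vec N) (X : Mat N) :
    IsCellSol μ γ (latHam A b f) x P X (corrector A b f μ γ x P X) (cellRho A b f μ γ x P X) := by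
  have hQ := continuous_cellSource (μ := μ) hbf x P X (cellRho A b f μ γ x P X)
  have hC2 : ∀ k, ContDiffOn ℝ 2 (corrector A b f μ γ x P X k) (Icc 0 1) := fun k =>
    (contDiff_cellCorrector hQ k).contDiffOn
  have hd2 : ∀ k, EqOn (d2I (corrector A b f μ γ x P X k))
      (cellSource A b f μ x P X (cellRho A b f μ γ x P X) k) (Icc 0 1) := fun k _ hy =>
    d2I_cellCorrector hQ k hy
  refine ⟨hC2, fun k j => by simp only [corrector, cellCorrector_zero],
    fun k => by simp only [corrector, cellCorrector_zero, cellCorrector_one],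
    fun k y hy => (cellEquation_iff (hμ k)).2 (hd2 k (Ioo_subset_Icc_self hy)), ?_⟩
  simp only [← integral_d2I (hC2 _) (hd2 _) (right_mem_Icc.2 zero_le_one)]
  rw [kirchhoff_sum_cellSource hbf hμ hγ, sub_self, mul_zero]

theorem cellAvg_corrector (hN : N ≠ 0) (hbf : latDataCond A b f K L) (x P : Vec N) (X : Mat N) :
    cellAvg (corrector A b f μ γ x P X) = 0 :=
  (cellAvg_eq_zero_iff hN (continuous_cellSource hbf x P X _) fun _ _ _ => rfl).2 rfl

theorem eq_corrector_of_isCellSol (hN : N ≠ 0) (hbf : latDataCond A b f K L)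
    (hμ : ∀ k, μ k ≠ 0) (hγ : ∑ k, γ k ≠ 0) {x P : Vec N} {X : Mat N} {v : Fin N → ℝ → ℝ}
    {ρ : ℝ} (hsol : IsCellSol μ γ (latHam A b f) x P X v ρ) (havg : cellAvg v = 0) :
    ρ = cellRho A b f μ γ x P X ∧ ∀ k, EqOn (v k) (corrector A b f μ γ x P X k) (Icc 0 1) := by
  obtain ⟨hC2, hvertex, hper, hcell, hkirchhoff⟩ := hsol
  have hQ := continuous_cellSource (μ := μ) hbf x P X ρ
  have hd2 : ∀ k, EqOn (d2I (v k)) (cellSource A b f μ x P X ρ k) (Icc 0 1) := fun k =>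
    EqOn.of_subset_closure (fun y hy => (cellEquation_iff (hμ k)).1 (hcell k y hy))
      (continuousOn_d2I (hC2 k)) (hQ k).continuousOn Ioo_subset_Icc_self
      (by rw [closure_Ioo zero_ne_one])
  have hρ : ρ = cellRho A b f μ γ x P X := by
    simp only [← integral_d2I (hC2 _) (hd2 _) (right_mem_Icc.2 zero_le_one)] at hkirchhoff
    rw [kirchhoff_sum_cellSource hbf hμ hγ] at hkirchhoff
    exact sub_eq_zero.1 ((mul_eq_zero.1 hkirchhoff).resolve_left hγ)
  subst hρ
  obtain ⟨k₀⟩ : Nonempty (Fin N) := ⟨⟨0, Nat.pos_of_ne_zero hN⟩⟩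
  have hshape : ∀ k, EqOn (v k) (fun y => v k₀ 0 + edgeProfile (cellSource A b f μ x P X
      (cellRho A b f μ γ x P X) k) y) (Icc 0 1) := fun k =>
    hvertex k k₀ ▸ eqOn_add_edgeProfile (hC2 k) (hQ k) (hd2 k) (hper k)
  have hshift := (cellAvg_eq_zero_iff hN hQ hshape).1 havg
  exact ⟨rfl, fun k y hy => by rw [hshape k hy, hshift]; rfl⟩

end CellSolution

section Estimates

theorem abs_weightedAvg_le {ι : Type*} (s : Finset ι) {w a : ι → ℝ} {B : ℝ} (hB : 0 ≤ B)
    (hw : ∀ i ∈ s, 0 ≤ w i) (ha : ∀ i ∈ s, |a i| ≤ B) :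
    |(∑ i ∈ s, w i * a i) / ∑ i ∈ s, w i| ≤ B := by
  rw [abs_div, abs_of_nonneg (Finset.sum_nonneg hw)]
  refine div_le_of_le_mul₀ (Finset.sum_nonneg hw) hB ?_
  calc |∑ i ∈ s, w i * a i| ≤ ∑ i ∈ s, w i * B := (Finset.abs_sum_le_sum_abs _ _).trans
        (Finset.sum_le_sum fun i hi => by
          rw [abs_mul, abs_of_nonneg (hw i hi)]
          exact mul_le_mul_of_nonneg_left (ha i hi) (hw i hi))
    _ = B * ∑ i ∈ s, w i := by rw [← Finset.sum_mul, mul_comm]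

variable {N : ℕ}

theorem abs_apply_le_norm (P : Vec N) (k : Fin N) : |P k| ≤ ‖P‖ := by
  simpa using norm_le_pi_norm P k

theorem matNorm_nonneg (X : Mat N) : 0 ≤ matNorm X :=
  Finset.sum_nonneg fun _ _ => Finset.sum_nonneg fun _ _ => abs_nonneg _

theorem abs_diag_le_matNorm (X : Mat N) (k : Fin N) : |X k k| ≤ matNorm X :=
  (Finset.single_le_sum (fun j _ => abs_nonneg (X k j)) (Finset.mem_univ k)).trans
    (Finset.single_le_sum (f := fun i => ∑ j, |X i j|)
      (fun _ _ => Finset.sum_nonneg fun _ _ => abs_nonneg _) (Finset.mem_univ k))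

theorem abs_div_le_sum_inv_mul {μ : Fin N → ℝ} (hμ : ∀ k, 0 < μ k) (k : Fin N) (u : ℝ) :
    |u / μ k| ≤ (∑ j, (μ j)⁻¹) * |u| := by
  rw [abs_div, abs_of_pos (hμ k), div_eq_inv_mul]
  gcongr
  exact Finset.single_le_sum (fun j _ => (inv_pos.2 (hμ j)).le) (Finset.mem_univ k)

def sourceBound (μ : Fin N → ℝ) (K : ℝ) : ℝ := (∑ j, (μ j)⁻¹) * (2 * K + ∑ j, μ j) + 1

variable {A : Type} [TopologicalSpace A] [Nonempty A] {b f : Fin N → Vec N → ℝ → A → ℝ}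
  {μ γ : Fin N → ℝ} {K L : ℝ}

theorem abs_latHam_sub_le_min (hbf : latDataCond A b f K L) (k : Fin N) (x₁ x₂ : Vec N)
    (y p₁ p₂ : ℝ) :
    |latHam A b f k x₁ y p₁ - latHam A b f k x₂ y p₂|
      ≤ K * |p₁ - p₂| + L * ‖x₁ - x₂‖ * (1 + min |p₁| |p₂|) := by
  have h₁₂ := abs_latHam_sub_le hbf k x₁ x₂ y y p₁ p₂
  have h₂₁ := abs_latHam_sub_le hbf k x₂ x₁ y y p₂ p₁
  rw [abs_sub_comm, norm_sub_rev, abs_sub_comm p₂] at h₂₁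
  simp only [sub_self, abs_zero, add_zero] at h₁₂ h₂₁
  rcases min_cases |p₁| |p₂| with ⟨h, -⟩ | ⟨h, -⟩ <;> rw [h] <;> assumption

theorem abs_latHam_apply_sub_le (hbf : latDataCond A b f K L) (hK : 0 ≤ K) (hL : 0 ≤ L)
    (k : Fin N) (x₁ P₁ : Vec N) (X₁ : Mat N) (x₂ P₂ : Vec N) (X₂ : Mat N) (y : ℝ) :
    |latHam A b f k x₁ y (P₁ k) - latHam A b f k x₂ y (P₂ k)|
      ≤ K * (‖P₁ - P₂‖ + matNorm (X₁ - X₂))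
        + L * (‖x₁ - x₂‖ * (1 + min ‖P₁‖ ‖P₂‖ + min (matNorm X₁) (matNorm X₂))) := by
  have hP : |P₁ k - P₂ k| ≤ ‖P₁ - P₂‖ + matNorm (X₁ - X₂) := by
    have h := abs_apply_le_norm (P₁ - P₂) k
    rw [Pi.sub_apply] at h
    linarith [matNorm_nonneg (X₁ - X₂)]
  have hmin : 1 + min |P₁ k| |P₂ k|
      ≤ 1 + min ‖P₁‖ ‖P₂‖ + min (matNorm X₁) (matNorm X₂) := by
    linarith [min_le_min (abs_apply_le_norm P₁ k) (abs_apply_le_norm P₂ k),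
      le_min (matNorm_nonneg X₁) (matNorm_nonneg X₂)]
  calc _ ≤ K * |P₁ k - P₂ k| + L * ‖x₁ - x₂‖ * (1 + min |P₁ k| |P₂ k|) :=
        abs_latHam_sub_le_min hbf k x₁ x₂ y (P₁ k) (P₂ k)
    _ ≤ _ := by rw [mul_assoc L]; gcongr

theorem abs_cellRho_le (hbf : latDataCond A b f K L) (hK : 0 ≤ K) (hμ : ∀ k, 0 < μ k)
    (hγ : ∀ k, 0 ≤ γ k) (x P : Vec N) (X : Mat N) :
    |cellRho A b f μ γ x P X| ≤ (∑ j, μ j + K) * (1 + ‖P‖ + matNorm X) := by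
  have hμs : 0 ≤ ∑ j, μ j := Finset.sum_nonneg fun j _ => (hμ j).le
  refine abs_weightedAvg_le _ (by positivity [matNorm_nonneg X]) (fun k _ => hγ k) fun k _ => ?_
  have hH : |∫ y in (0:ℝ)..1, latHam A b f k x y (P k)| ≤ K * (1 + |P k|) :=
    abs_integral_le_of_abs_le (fun t _ => abs_latHam_le hbf k x t (P k))
      (right_mem_Icc.2 zero_le_one)
  have hX : μ k * |X k k| ≤ (∑ j, μ j) * matNorm X :=
    mul_le_mul (Finset.single_le_sum (fun j _ => (hμ j).le) (Finset.mem_univ k))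
      (abs_diag_le_matNorm X k) (abs_nonneg _) hμs
  have hP : K * |P k| ≤ K * ‖P‖ := by gcongr; exact abs_apply_le_norm P k
  calc _ ≤ μ k * |X k k| + |∫ y in (0:ℝ)..1, latHam A b f k x y (P k)| := by
        rw [← abs_of_pos (hμ k), ← abs_mul, abs_of_pos (hμ k)]; exact abs_sub _ _
    _ ≤ _ := by nlinarith [norm_nonneg P, matNorm_nonneg X]

theorem abs_cellRho_sub_le (hbf : latDataCond A b f K L) (hK : 0 ≤ K) (hL : 0 ≤ L)
    (hμ : ∀ k, 0 < μ k) (hγ : ∀ k, 0 ≤ γ k) (x₁ P₁ : Vec N) (X₁ : Mat N) (x₂ P₂ : Vec N)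
    (X₂ : Mat N) :
    |cellRho A b f μ γ x₁ P₁ X₁ - cellRho A b f μ γ x₂ P₂ X₂|
      ≤ (∑ j, μ j + K) * (‖P₁ - P₂‖ + matNorm (X₁ - X₂))
        + L * (‖x₁ - x₂‖ * (1 + min ‖P₁‖ ‖P₂‖ + min (matNorm X₁) (matNorm X₂))) := by
  set D := ‖P₁ - P₂‖ + matNorm (X₁ - X₂)
  set F := ‖x₁ - x₂‖ * (1 + min ‖P₁‖ ‖P₂‖ + min (matNorm X₁) (matNorm X₂))
  have hD : 0 ≤ D := by positivity [matNorm_nonneg (X₁ - X₂)]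
  have hF : 0 ≤ F := by positivity [le_min (matNorm_nonneg X₁) (matNorm_nonneg X₂)]
  rw [cellRho, cellRho, div_sub_div_same, ← Finset.sum_sub_distrib]
  simp only [← mul_sub]
  refine abs_weightedAvg_le _ (by positivity [Finset.sum_nonneg fun j (_ : j ∈ Finset.univ) =>
    (hμ j).le]) (fun k _ => hγ k) fun k _ => ?_
  have hH := abs_integral_le_of_abs_le (fun t _ => abs_latHam_apply_sub_le hbf hK hL k x₁ P₁ X₁
    x₂ P₂ X₂ t) (right_mem_Icc.2 zero_le_one)
  rw [integral_sub ((continuous_latHam hbf k x₁ (P₁ k)).intervalIntegrable _ _)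
    ((continuous_latHam hbf k x₂ (P₂ k)).intervalIntegrable _ _)] at hH
  have hX : μ k * |X₁ k k - X₂ k k| ≤ (∑ j, μ j) * D :=
    mul_le_mul (Finset.single_le_sum (fun j _ => (hμ j).le) (Finset.mem_univ k))
      ((abs_diag_le_matNorm (X₁ - X₂) k).trans (by simp only [D]; linarith [norm_nonneg (P₁ - P₂)]))
      (abs_nonneg _) (Finset.sum_nonneg fun j _ => (hμ j).le)
  calc _ = |μ k * (X₁ k k - X₂ k k) - ((∫ y in (0:ℝ)..1, latHam A b f k x₁ y (P₁ k))
        - ∫ y in (0:ℝ)..1, latHam A b f k x₂ y (P₂ k))| := by ring_nf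
    _ ≤ μ k * |X₁ k k - X₂ k k| + |(∫ y in (0:ℝ)..1, latHam A b f k x₁ y (P₁ k))
        - ∫ y in (0:ℝ)..1, latHam A b f k x₂ y (P₂ k)| := by
        rw [← abs_of_pos (hμ k), ← abs_mul, abs_of_pos (hμ k)]; exact abs_sub _ _
    _ ≤ _ := by linarith

theorem abs_cellSource_le (hbf : latDataCond A b f K L) (hK : 0 ≤ K) (hμ : ∀ k, 0 < μ k)
    (hγ : ∀ k, 0 ≤ γ k) (x P : Vec N) (X : Mat N) (k : Fin N) (y : ℝ) :
    |cellSource A b f μ x P X (cellRho A b f μ γ x P X) k y|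
      ≤ sourceBound μ K * (1 + ‖P‖ + matNorm X) := by
  set E := 1 + ‖P‖ + matNorm X
  have hν : 0 ≤ ∑ j, (μ j)⁻¹ := Finset.sum_nonneg fun j _ => (inv_pos.2 (hμ j)).le
  have hH : |latHam A b f k x y (P k)| ≤ K * E := (abs_latHam_le hbf k x y (P k)).trans <| by
    gcongr; linarith [abs_apply_le_norm P k, matNorm_nonneg X]
  have hR := abs_cellRho_le hbf hK hμ hγ x P X
  have hX : |X k k| ≤ E := (abs_diag_le_matNorm X k).trans (by linarith [norm_nonneg P])
  calc _ ≤ (∑ j, (μ j)⁻¹) * |latHam A b f k x y (P k) + cellRho A b f μ γ x P X| + |X k k| :=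
        (abs_sub _ _).trans (add_le_add (abs_div_le_sum_inv_mul hμ k _) le_rfl)
    _ ≤ (∑ j, (μ j)⁻¹) * (K * E + (∑ j, μ j + K) * E) + E := by
        gcongr; exact (abs_add_le _ _).trans (add_le_add hH hR)
    _ = _ := by rw [sourceBound]; ring

theorem abs_cellSource_sub_cellSource_le (hbf : latDataCond A b f K L) (hμ : ∀ k, 0 < μ k)
    (x P : Vec N) (X : Mat N) (ρ : ℝ) (k : Fin N) (y z : ℝ) :
    |cellSource A b f μ x P X ρ k y - cellSource A b f μ x P X ρ k z|
      ≤ (∑ j, (μ j)⁻¹) * L * (1 + ‖P‖ + matNorm X) * |y - z| := by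
  have hH := abs_latHam_sub_le hbf k x x y z (P k) (P k)
  simp only [sub_self, abs_zero, norm_zero, mul_zero, zero_add] at hH
  have hL : 0 ≤ L := (latDataCond.nonneg hbf k).2
  have hν : 0 ≤ ∑ j, (μ j)⁻¹ := Finset.sum_nonneg fun j _ => (inv_pos.2 (hμ j)).le
  calc _ = |(latHam A b f k x y (P k) - latHam A b f k x z (P k)) / μ k| := by
        simp only [cellSource]; ring_nf
    _ ≤ (∑ j, (μ j)⁻¹) * (L * |y - z| * (1 + |P k|)) :=
        (abs_div_le_sum_inv_mul hμ k _).trans (by gcongr)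
    _ ≤ (∑ j, (μ j)⁻¹) * (L * |y - z| * (1 + ‖P‖ + matNorm X)) := by
        gcongr (∑ j, (μ j)⁻¹) * (L * |y - z| * ?_)
        linarith [abs_apply_le_norm P k, matNorm_nonneg X]
    _ = _ := by ring

theorem abs_cellSource_sub_le (hbf : latDataCond A b f K L) (hK : 0 ≤ K) (hL : 0 ≤ L)
    (hμ : ∀ k, 0 < μ k) (hγ : ∀ k, 0 ≤ γ k) (x₁ P₁ : Vec N) (X₁ : Mat N) (x₂ P₂ : Vec N)
    (X₂ : Mat N) (k : Fin N) (y : ℝ) :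
    |cellSource A b f μ x₁ P₁ X₁ (cellRho A b f μ γ x₁ P₁ X₁) k y
        - cellSource A b f μ x₂ P₂ X₂ (cellRho A b f μ γ x₂ P₂ X₂) k y|
      ≤ sourceBound μ K * (‖P₁ - P₂‖ + matNorm (X₁ - X₂))
        + 2 * ((∑ j, (μ j)⁻¹) * L)
          * (‖x₁ - x₂‖ * (1 + min ‖P₁‖ ‖P₂‖ + min (matNorm X₁) (matNorm X₂))) := by
  set D := ‖P₁ - P₂‖ + matNorm (X₁ - X₂)
  set F := ‖x₁ - x₂‖ * (1 + min ‖P₁‖ ‖P₂‖ + min (matNorm X₁) (matNorm X₂))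
  have hν : 0 ≤ ∑ j, (μ j)⁻¹ := Finset.sum_nonneg fun j _ => (inv_pos.2 (hμ j)).le
  have hH := abs_latHam_apply_sub_le hbf hK hL k x₁ P₁ X₁ x₂ P₂ X₂ y
  have hR := abs_cellRho_sub_le hbf hK hL hμ hγ x₁ P₁ X₁ x₂ P₂ X₂
  have hX : |X₁ k k - X₂ k k| ≤ D :=
    (abs_diag_le_matNorm (X₁ - X₂) k).trans (by linarith [norm_nonneg (P₁ - P₂)])
  calc _ = |(latHam A b f k x₁ y (P₁ k) - latHam A b f k x₂ y (P₂ k)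
          + (cellRho A b f μ γ x₁ P₁ X₁ - cellRho A b f μ γ x₂ P₂ X₂)) / μ k
          - (X₁ k k - X₂ k k)| := by
        simp only [cellSource]; ring_nf
    _ ≤ (∑ j, (μ j)⁻¹) * ((K * D + L * F) + ((∑ j, μ j + K) * D + L * F)) + D :=
        (abs_sub _ _).trans (add_le_add ((abs_div_le_sum_inv_mul hμ k _).trans (by
          gcongr; exact (abs_add_le _ _).trans (add_le_add hH hR))) hX)
    _ = _ := by rw [sourceBound]; ring

theorem cellC2θnorm_one_corrector_le (hbf : latDataCond A b f K L) (hK : 0 ≤ K) (hL : 0 ≤ L)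
    (hμ : ∀ k, 0 < μ k) (hγ : ∀ k, 0 ≤ γ k) (x P : Vec N) (X : Mat N) :
    cellC2θnorm 1 (corrector A b f μ γ x P X)
      ≤ (7 * N * sourceBound μ K + (∑ j, (μ j)⁻¹) * L) * (1 + ‖P‖ + matNorm X) := by
  have hν : 0 ≤ ∑ j, (μ j)⁻¹ := Finset.sum_nonneg fun j _ => (inv_pos.2 (hμ j)).le
  calc _ ≤ 7 * N * (sourceBound μ K * (1 + ‖P‖ + matNorm X))
        + (∑ j, (μ j)⁻¹) * L * (1 + ‖P‖ + matNorm X) :=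
        cellC2θnorm_one_cellCorrector_le (continuous_cellSource hbf x P X _)
          (by positivity [matNorm_nonneg X]) (fun k t _ => abs_cellSource_le hbf hK hμ hγ x P X k t)
          (fun k y _ z _ => abs_cellSource_sub_cellSource_le hbf hμ x P X _ k y z)
    _ = _ := by ring

theorem abs_corrector_sub_le (hbf : latDataCond A b f K L) (hK : 0 ≤ K) (hL : 0 ≤ L)
    (hμ : ∀ k, 0 < μ k) (hγ : ∀ k, 0 ≤ γ k) (x₁ P₁ : Vec N) (X₁ : Mat N) (x₂ P₂ : Vec N)
    (X₂ : Mat N) (k : Fin N) {y : ℝ} (hy : y ∈ Icc (0:ℝ) 1) :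
    |corrector A b f μ γ x₁ P₁ X₁ k y - corrector A b f μ γ x₂ P₂ X₂ k y|
      ≤ 4 * sourceBound μ K * (‖P₁ - P₂‖ + matNorm (X₁ - X₂))
        + 8 * ((∑ j, (μ j)⁻¹) * L)
          * (‖x₁ - x₂‖ * (1 + min ‖P₁‖ ‖P₂‖ + min (matNorm X₁) (matNorm X₂))) := by
  set Q₁ := cellSource A b f μ x₁ P₁ X₁ (cellRho A b f μ γ x₁ P₁ X₁)
  set Q₂ := cellSource A b f μ x₂ P₂ X₂ (cellRho A b f μ γ x₂ P₂ X₂)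
  have hsub : cellCorrector (Q₁ - Q₂) k y = cellCorrector Q₁ k y - cellCorrector Q₂ k y := by
    rw [cellCorrector_sub (continuous_cellSource hbf x₁ P₁ X₁ _)
      (continuous_cellSource hbf x₂ P₂ X₂ _), Pi.sub_apply, Pi.sub_apply]
  calc _ = |cellCorrector (Q₁ - Q₂) k y| := by rw [hsub]; rfl
    _ ≤ 4 * (sourceBound μ K * (‖P₁ - P₂‖ + matNorm (X₁ - X₂)) + 2 * ((∑ j, (μ j)⁻¹) * L)
          * (‖x₁ - x₂‖ * (1 + min ‖P₁‖ ‖P₂‖ + min (matNorm X₁) (matNorm X₂)))) :=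
        abs_cellCorrector_le
          (fun k t _ => abs_cellSource_sub_le hbf hK hL hμ hγ x₁ P₁ X₁ x₂ P₂ X₂ k t) k hy
    _ = _ := by ring

end Estimates

end CellProblem

open CellProblem in
theorem corrector_estimates_general
    {N : ℕ} (hN : 1 ≤ N)
    (μ γ : Fin N → ℝ) (hμ : ∀ k, 0 < μ k) (hγ : ∀ k, 0 < γ k)
    (A : Type) [MetricSpace A] [Nonempty A]
    (b f : Fin N → Vec N → ℝ → A → ℝ) (K L : ℝ) (hbf : latDataCond A b f K L) :
    ∃ (V : Vec N → Vec N → Mat N → Fin N → ℝ → ℝ) (R : Vec N → Vec N → Mat N → ℝ),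
      (∀ (x P : Vec N) (X : Mat N), X.IsSymm →
        IsCellSol μ γ (latHam A b f) x P X (V x P X) (R x P X) ∧
        cellAvg (V x P X) = 0 ∧
        (∀ (v : Fin N → ℝ → ℝ) (ρ : ℝ),
          IsCellSol μ γ (latHam A b f) x P X v ρ → cellAvg v = 0 →
          ρ = R x P X ∧ ∀ k, EqOn (v k) (V x P X k) (Icc 0 1))) ∧
      ∃ (C₁ C₂ θ : ℝ), θ ∈ Ioc (0:ℝ) 1 ∧
        (∀ (x P : Vec N) (X : Mat N), X.IsSymm →
          cellC2θnorm θ (V x P X) ≤ C₁ * (1 + ‖P‖ + matNorm X)) ∧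
        (∀ (x₁ P₁ : Vec N) (X₁ : Mat N) (x₂ P₂ : Vec N) (X₂ : Mat N),
          X₁.IsSymm → X₂.IsSymm →
          ∀ k, ∀ y ∈ Icc (0:ℝ) 1,
            |V x₁ P₁ X₁ k y - V x₂ P₂ X₂ k y| ≤
              C₂ * (‖P₁ - P₂‖ + matNorm (X₁ - X₂)) +
              C₁ * ‖x₁ - x₂‖ *
                (1 + min ‖P₁‖ ‖P₂‖ + min (matNorm X₁) (matNorm X₂))) := by
  obtain ⟨hK, hL⟩ := latDataCond.nonneg hbf ⟨0, hN⟩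
  have hN₀ : N ≠ 0 := by omega
  have hμ₀ : ∀ k, μ k ≠ 0 := fun k => (hμ k).ne'
  have hγ₀ : ∑ k, γ k ≠ 0 := (Finset.sum_pos (fun k _ => hγ k) ⟨⟨0, hN⟩, Finset.mem_univ _⟩).ne'
  have hγ' : ∀ k, 0 ≤ γ k := fun k => (hγ k).le
  have hν : 0 ≤ ∑ j, (μ j)⁻¹ := Finset.sum_nonneg fun j _ => (inv_pos.2 (hμ j)).le
  have hΛ : 0 ≤ (∑ j, (μ j)⁻¹) * L := mul_nonneg hν hL
  have hB : 0 ≤ sourceBound μ K := add_nonneg (mul_nonneg hν (add_nonneg (by linarith)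
    (Finset.sum_nonneg fun j _ => (hμ j).le))) zero_le_one
  refine ⟨corrector A b f μ γ, cellRho A b f μ γ, fun x P X _ =>
    ⟨isCellSol_corrector hbf hμ₀ hγ₀ x P X, cellAvg_corrector hN₀ hbf x P X,
      fun v ρ hsol havg => eq_corrector_of_isCellSol hN₀ hbf hμ₀ hγ₀ hsol havg⟩,
    7 * N * sourceBound μ K + 8 * ((∑ j, (μ j)⁻¹) * L), 4 * sourceBound μ K, 1,
    ⟨one_pos, le_rfl⟩, fun x P X _ => ?_, fun x₁ P₁ X₁ x₂ P₂ X₂ _ _ k y hy => ?_⟩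
  · exact (cellC2θnorm_one_corrector_le hbf hK hL hμ hγ' x P X).trans
      (mul_le_mul_of_nonneg_right (by linarith) (by positivity [matNorm_nonneg X]))
  · refine (abs_corrector_sub_le hbf hK hL hμ hγ' x₁ P₁ X₁ x₂ P₂ X₂ k hy).trans ?_
    rw [mul_assoc _ ‖x₁ - x₂‖]
    gcongr
    · positivity [le_min (matNorm_nonneg X₁) (matNorm_nonneg X₂)]
    · linarith [mul_nonneg (mul_nonneg (by norm_num : (0:ℝ) ≤ 7) (Nat.cast_nonneg N)) hB]

/-- Lemma 5.1, corrector estimates. For every `(x,P,X)` there exists a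
unique solution `(v,ρ)` of the cell problem normalized by `⟨v⟩ = 0`; denote it
`v(·;x,P,X)`. There exist constants `C̄₁, C̄₂` and `θ ∈ (0,1]`, independent of `(x,P,X)`,
such that `‖v(·;x,P,X)‖_{C^{2,θ}} ≤ C̄₁ (1 + |P| + |X|)` and
`‖v(·;x₁,P₁,X₁) - v(·;x₂,P₂,X₂)‖_{L∞} ≤ C̄₂ (|P₁-P₂| + |X₁-X₂|)
+ C̄₁ |x₁-x₂| (1 + min(|P₁|,|P₂|) + min(|X₁|,|X₂|))`. -/
theorem corrector_estimates
    {N : ℕ} (hN : 1 ≤ N)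
    (μ γ : Fin N → ℝ) (hμ : ∀ k, 0 < μ k) (hγ : ∀ k, 0 < γ k)
    (hnorm : 2 * ∑ k, γ k * μ k = 1)
    (A : Type) [MetricSpace A] [CompactSpace A] [Nonempty A]
    (b f : Fin N → Vec N → ℝ → A → ℝ) (K L : ℝ) (hbf : latDataCond A b f K L) :
    ∃ (V : Vec N → Vec N → Mat N → Fin N → ℝ → ℝ) (R : Vec N → Vec N → Mat N → ℝ),
      (∀ (x P : Vec N) (X : Mat N), X.IsSymm →
        IsCellSol μ γ (latHam A b f) x P X (V x P X) (R x P X) ∧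
        cellAvg (V x P X) = 0 ∧
        (∀ (v : Fin N → ℝ → ℝ) (ρ : ℝ),
          IsCellSol μ γ (latHam A b f) x P X v ρ → cellAvg v = 0 →
          ρ = R x P X ∧ ∀ k, EqOn (v k) (V x P X k) (Icc 0 1))) ∧
      ∃ (C₁ C₂ θ : ℝ), θ ∈ Ioc (0:ℝ) 1 ∧
        (∀ (x P : Vec N) (X : Mat N), X.IsSymm →
          cellC2θnorm θ (V x P X) ≤ C₁ * (1 + ‖P‖ + matNorm X)) ∧
        (∀ (x₁ P₁ : Vec N) (X₁ : Mat N) (x₂ P₂ : Vec N) (X₂ : Mat N),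
          X₁.IsSymm → X₂.IsSymm →
          ∀ k, ∀ y ∈ Icc (0:ℝ) 1,
            |V x₁ P₁ X₁ k y - V x₂ P₂ X₂ k y| ≤
              C₂ * (‖P₁ - P₂‖ + matNorm (X₁ - X₂)) +
              C₁ * ‖x₁ - x₂‖ *
                (1 + min ‖P₁‖ ‖P₂‖ + min (matNorm X₁) (matNorm X₂))) :=
  corrector_estimates_general hN μ γ hμ hγ A b f K L hbf
end
end
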